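/- arXiv:1310.3314 — 9 statements merged into one kernel-verified Lean document; each statement's English description precedes it below -/
import Mathlib

section
/- Let Q = ⋈_{F∈E} R_F be a natural join query whose hypergraph is H = (V, E), with each relation R_F finite, and let x = (x_F)_{F∈E} be any fractional edge cover of H. Then the size of the join output satisfies |Q| ≤ ∏_{F∈E} |R_F|^{x_F}. -/
/-!
Every tuple of the join projects into `R_F`, so it suffices to show `|Q| ≤ ∏_F |π_F Q| ^ x_F`
for every finite set `Q` of tuples. This goes by strong
induction on `|Q|`: split `Q` into the fibres `Q_d = {t ∈ Q | t v = d}` over a vertex `v` on which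
`Q` is not constant. Each fibre is smaller, and for the edges `F ∋ v` the projections `π_F Q_d`
are disjoint pieces of `π_F Q`. Since the weights `x_F` of the edges through `v` add up to at
least one, Hölder's inequality recombines the bounds on the fibres into the bound on `Q`.
-/

open Finset

namespace Real

variable {ι κ : Type*} {s : Finset ι} {w : ι → ℝ}

lemma prod_rpow_le_sum_div_mul_of_le_one (hw : ∀ i ∈ s, 0 ≤ w i) (hW : 1 ≤ ∑ i ∈ s, w i)
    {a : ι → ℝ} (ha0 : ∀ i ∈ s, 0 ≤ a i) (ha1 : ∀ i ∈ s, a i ≤ 1) :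
    ∏ i ∈ s, a i ^ w i ≤ ∑ i ∈ s, w i / (∑ j ∈ s, w j) * a i := by
  set W := ∑ j ∈ s, w j
  have hW0 : 0 < W := one_pos.trans_le hW
  calc ∏ i ∈ s, a i ^ w i
      ≤ ∏ i ∈ s, a i ^ (w i / W) := by
        refine prod_le_prod (fun i hi => by have := ha0 i hi; positivity) fun i hi => ?_
        exact rpow_le_rpow_of_exponent_ge' (ha0 i hi) (ha1 i hi)
          (div_nonneg (hw i hi) hW0.le) (div_le_self (hw i hi) hW)
    _ ≤ ∑ i ∈ s, w i / W * a i :=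
        geom_mean_le_arith_mean_weighted s _ _ (fun i hi => div_nonneg (hw i hi) hW0.le)
          (by rw [← sum_div, div_self hW0.ne']) ha0

lemma sum_prod_rpow_le_one (hw : ∀ i ∈ s, 0 ≤ w i) (hW : 1 ≤ ∑ i ∈ s, w i) {t : Finset κ}
    {a : ι → κ → ℝ} (ha0 : ∀ i ∈ s, ∀ k ∈ t, 0 ≤ a i k) (ha1 : ∀ i ∈ s, ∑ k ∈ t, a i k ≤ 1) :
    ∑ k ∈ t, ∏ i ∈ s, a i k ^ w i ≤ 1 := by
  set W := ∑ j ∈ s, w j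
  have hW0 : 0 < W := one_pos.trans_le hW
  calc ∑ k ∈ t, ∏ i ∈ s, a i k ^ w i
      ≤ ∑ k ∈ t, ∑ i ∈ s, w i / W * a i k := by
        refine sum_le_sum fun k hk => prod_rpow_le_sum_div_mul_of_le_one hw hW
          (fun i hi => ha0 i hi k hk) fun i hi => ?_
        exact (single_le_sum (fun k hk => ha0 i hi k hk) hk).trans (ha1 i hi)
    _ = ∑ i ∈ s, w i / W * ∑ k ∈ t, a i k := by
        rw [sum_comm]; simp only [mul_sum]
    _ ≤ ∑ i ∈ s, w i / W * 1 := by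
        gcongr with i hi
        · exact div_nonneg (hw i hi) hW0.le
        · exact ha1 i hi
    _ = 1 := by rw [← sum_mul, ← sum_div, div_self hW0.ne', one_mul]

theorem sum_prod_rpow_le_prod_sum_rpow (hw : ∀ i ∈ s, 0 ≤ w i) (hW : 1 ≤ ∑ i ∈ s, w i)
    {t : Finset κ} {f : ι → κ → ℝ} (hf : ∀ i ∈ s, ∀ k ∈ t, 0 ≤ f i k) :
    ∑ k ∈ t, ∏ i ∈ s, f i k ^ w i ≤ ∏ i ∈ s, (∑ k ∈ t, f i k) ^ w i := by
  set S : ι → ℝ := fun i => ∑ k ∈ t, f i k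
  have hS : ∀ i ∈ s, 0 ≤ S i := fun i hi => sum_nonneg (hf i hi)
  have ha0 : ∀ i ∈ s, ∀ k ∈ t, 0 ≤ f i k / S i := fun i hi k hk =>
    div_nonneg (hf i hi k hk) (hS i hi)
  have hfactor : ∀ k ∈ t, ∏ i ∈ s, f i k ^ w i
      = (∏ i ∈ s, S i ^ w i) * ∏ i ∈ s, (f i k / S i) ^ w i := by
    intro k hk
    rw [← prod_mul_distrib]
    refine prod_congr rfl fun i hi => ?_
    rw [← mul_rpow (hS i hi) (ha0 i hi k hk), mul_div_cancel_of_imp' fun h =>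
      (sum_eq_zero_iff_of_nonneg (hf i hi)).1 h k hk]
  calc ∑ k ∈ t, ∏ i ∈ s, f i k ^ w i
      = (∏ i ∈ s, S i ^ w i) * ∑ k ∈ t, ∏ i ∈ s, (f i k / S i) ^ w i := by
        rw [mul_sum]; exact sum_congr rfl hfactor
    _ ≤ (∏ i ∈ s, S i ^ w i) * 1 := by
        gcongr
        · exact prod_nonneg fun i hi => by have := hS i hi; positivity
        · refine sum_prod_rpow_le_one hw hW ha0 fun i hi => ?_
          rw [← sum_div]; exact div_self_le_one _
    _ = ∏ i ∈ s, S i ^ w i := mul_one _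

end Real

namespace Finset

variable {V D : Type*} [DecidableEq D]

lemma sum_card_image_restrict_fiber_le (Q : Finset (V → D)) {F : Finset V} {v : V} (hv : v ∈ F)
    (T : Finset D) : ∑ d ∈ T, #((Q.filter (· v = d)).image F.restrict) ≤ #(Q.image F.restrict) := by
  have hfiber : ∀ d, (Q.filter (· v = d)).image F.restrict
      = (Q.image F.restrict).filter (fun s => s ⟨v, hv⟩ = d) := fun d => by
    rw [filter_image]; rfl
  simp only [hfiber, sum_card_fiberwise_eq_card_filter]
  exact card_filter_le _ _

lemma card_le_one_of_forall_card_image_eval_le_one {Q : Finset (V → D)}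
    (hQ : ∀ v, #(Q.image (· v)) ≤ 1) : #Q ≤ 1 :=
  card_le_one.2 fun _ ht _ ht' => funext fun v =>
    card_le_one.1 (hQ v) _ (mem_image_of_mem _ ht) _ (mem_image_of_mem _ ht')

variable [DecidableEq V]

lemma sum_prod_card_image_restrict_fiber_rpow_le (E : Finset (Finset V)) {x : Finset V → ℝ}
    (hx : ∀ F ∈ E, 0 ≤ x F) (Q : Finset (V → D)) {v : V}
    (hv : 1 ≤ ∑ F ∈ E.filter (v ∈ ·), x F) :
    ∑ d ∈ Q.image (· v), ∏ F ∈ E, (#((Q.filter (· v = d)).image F.restrict) : ℝ) ^ x F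
      ≤ ∏ F ∈ E, (#(Q.image F.restrict) : ℝ) ^ x F := by
  set K := ∏ F ∈ E.filter (v ∉ ·), (#(Q.image F.restrict) : ℝ) ^ x F
  have hxv : ∀ F ∈ E.filter (v ∈ ·), 0 ≤ x F := fun F hF => hx F (mem_filter.1 hF).1
  calc ∑ d ∈ Q.image (· v), ∏ F ∈ E, (#((Q.filter (· v = d)).image F.restrict) : ℝ) ^ x F
      ≤ ∑ d ∈ Q.image (· v),
          (∏ F ∈ E.filter (v ∈ ·), (#((Q.filter (· v = d)).image F.restrict) : ℝ) ^ x F) * K := by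
        gcongr with d
        rw [← prod_filter_mul_prod_filter_not E (v ∈ ·)]
        gcongr
        refine prod_le_prod (fun F _ => by positivity) fun F hF => ?_
        gcongr
        · exact hx F (mem_filter.1 hF).1
        · exact filter_subset _ _
    _ ≤ (∏ F ∈ E.filter (v ∈ ·),
          (∑ d ∈ Q.image (· v), (#((Q.filter (· v = d)).image F.restrict) : ℝ)) ^ x F) * K := by
        rw [← sum_mul]
        gcongr
        exact Real.sum_prod_rpow_le_prod_sum_rpow hxv hv fun _ _ _ _ => Nat.cast_nonneg _
    _ ≤ (∏ F ∈ E.filter (v ∈ ·), (#(Q.image F.restrict) : ℝ) ^ x F) * K := by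
        gcongr with F hF
        · exact hxv F hF
        · exact_mod_cast sum_card_image_restrict_fiber_le Q (mem_filter.1 hF).2 _
    _ = ∏ F ∈ E, (#(Q.image F.restrict) : ℝ) ^ x F := prod_filter_mul_prod_filter_not _ _ _

theorem card_le_prod_card_image_restrict_rpow (E : Finset (Finset V)) {x : Finset V → ℝ}
    (hx : ∀ F ∈ E, 0 ≤ x F) (Q : Finset (V → D))
    (hcover : ∀ v, 1 < #(Q.image (· v)) → 1 ≤ ∑ F ∈ E.filter (v ∈ ·), x F) :
    (#Q : ℝ) ≤ ∏ F ∈ E, (#(Q.image F.restrict) : ℝ) ^ x F := by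
  induction Q using strongInduction with
  | H Q ih =>
  by_cases hQ : ∃ v, 1 < #(Q.image (· v))
  · obtain ⟨v, hv⟩ := hQ
    have hfiber : ∀ d, Q.filter (· v = d) ⊂ Q := by
      intro d
      obtain ⟨a, ha, b, hb, hab⟩ := one_lt_card.1 hv
      obtain ⟨t, ht, rfl⟩ := mem_image.1 ha
      obtain ⟨t', ht', rfl⟩ := mem_image.1 hb
      refine filter_ssubset.2 ?_
      by_cases htd : t v = d
      · exact ⟨t', ht', fun h => hab (htd.trans h.symm)⟩
      · exact ⟨t, ht, htd⟩
    calc (#Q : ℝ) = ∑ d ∈ Q.image (· v), (#(Q.filter (· v = d)) : ℝ) := by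
          exact_mod_cast card_eq_sum_card_image (· v) Q
      _ ≤ ∑ d ∈ Q.image (· v), ∏ F ∈ E, (#((Q.filter (· v = d)).image F.restrict) : ℝ) ^ x F := by
          refine sum_le_sum fun d _ => ih _ (hfiber d) fun u hu => hcover u ?_
          exact hu.trans_le (card_le_card (image_subset_image (filter_subset _ _)))
      _ ≤ _ := sum_prod_card_image_restrict_fiber_rpow_le E hx Q (hcover v hv)
  · push Not at hQ
    rcases Q.eq_empty_or_nonempty with rfl | hne
    · simpa using prod_nonneg fun F _ => by positivity
    · calc (#Q : ℝ) ≤ 1 := by exact_mod_cast card_le_one_of_forall_card_image_eval_le_one hQ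
        _ ≤ _ := one_le_prod fun F hF => Real.one_le_rpow
            (by exact_mod_cast (hne.image _).card_pos) (hx F hF)

end Finset

theorem agm_bound_general {V D : Type*} [DecidableEq V]
    (E : Finset (Finset V))
    (R : (F : Finset V) → Set ({v : V // v ∈ F} → D))
    (hR : ∀ F ∈ E, (R F).Finite)
    (x : Finset V → ℝ)
    (hx0 : ∀ F ∈ E, 0 ≤ x F)
    (hxcover : ∀ v : V, 1 ≤ ∑ F ∈ E.filter (fun F => v ∈ F), x F) :
    (({t : V → D | ∀ F ∈ E, (fun v : {v : V // v ∈ F} => t v.1) ∈ R F}).ncard : ℝ)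
      ≤ ∏ F ∈ E, ((R F).ncard : ℝ) ^ (x F) := by
  classical
  set J := {t : V → D | ∀ F ∈ E, (fun v : {v : V // v ∈ F} => t v.1) ∈ R F}
  rcases J.finite_or_infinite with hJ | hJ
  · have hproj : ∀ F ∈ E, #(hJ.toFinset.image F.restrict) ≤ (R F).ncard := fun F hF => by
      rw [← Set.ncard_coe_finset]
      refine Set.ncard_le_ncard ?_ (hR F hF)
      rintro _ hs
      obtain ⟨t, ht, rfl⟩ := mem_image.1 hs
      exact (hJ.mem_toFinset.1 ht) F hF
    calc (J.ncard : ℝ) = #hJ.toFinset := by rw [Set.ncard_eq_toFinset_card _ hJ]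
      _ ≤ ∏ F ∈ E, (#(hJ.toFinset.image F.restrict) : ℝ) ^ x F :=
          card_le_prod_card_image_restrict_rpow E hx0 _ fun v _ => hxcover v
      _ ≤ ∏ F ∈ E, ((R F).ncard : ℝ) ^ x F := by
          gcongr with F hF
          · exact hx0 F hF
          · exact_mod_cast hproj F hF
  · -- the junk value `ncard = 0` of an infinite set
    rw [hJ.ncard, Nat.cast_zero]
    exact prod_nonneg fun F _ => by positivity

/-- **AGM bound.** Let `Q = ⋈_{F ∈ E} R_F` be a natural join query whose hypergraph is
`H = (V, E)`, with each relation `R_F` finite, and let `x = (x_F)_{F ∈ E}` be any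
fractional edge cover of `H`.  Then `|Q| ≤ ∏_{F ∈ E} |R_F| ^ (x_F)`. -/
theorem agm_bound {V D : Type*} [Fintype V] [DecidableEq V]
    (E : Finset (Finset V))
    (R : (F : Finset V) → Set ({v : V // v ∈ F} → D))
    (hR : ∀ F ∈ E, (R F).Finite)
    (x : Finset V → ℝ)
    (hx0 : ∀ F ∈ E, 0 ≤ x F)
    (hxcover : ∀ v : V, 1 ≤ ∑ F ∈ E.filter (fun F => v ∈ F), x F) :
    (({t : V → D | ∀ F ∈ E, (fun v : {v : V // v ∈ F} => t v.1) ∈ R F}).ncard : ℝ)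
      ≤ ∏ F ∈ E, ((R F).ncard : ℝ) ^ (x F) :=
  agm_bound_general E R hR x hx0 hxcover
end

section
/- (AGM bound for the triangle query.) Let R ⊆ A × B, S ⊆ B × C, and T ⊆ A × C be finite binary relations, and let Q_△ = {(a,b,c) : (a,b) ∈ R, (b,c) ∈ S, (a,c) ∈ T}. Then |Q_△| ≤ √(|R| · |S| · |T|). In particular, if |R| = |S| = |T| = N then |Q_△| ≤ N^{3/2}. -/
/-!
Split the triangles `(a, b, c)` according to their middle vertex `b`. The fibre over `b` injects
both into `T` (forget `b`) and into `R_b × S_b`, the edges of `R` and `S` through `b`; hence its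
size is at most `√(|T| · |R_b| · |S_b|)`. Summing over `b` and applying Cauchy–Schwarz to
`∑ √|R_b| √|S_b|` gives `√|T| · √|R| · √|S|`.
-/

open Finset

lemma Real.le_sqrt_mul_of_le_of_le {n x y : ℝ} (hn : 0 ≤ n) (hx : n ≤ x) (hy : n ≤ y) :
    n ≤ √(x * y) :=
  Real.le_sqrt_of_sq_le (by nlinarith)

lemma Real.sqrt_mul_self_mul_self {x : ℝ} (hx : 0 ≤ x) :
    √(x * x * x) = x ^ ((3 : ℝ) / 2) := by
  have hcube : x * x * x = x ^ (3 : ℝ) := by norm_cast; ring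
  rw [Real.sqrt_eq_rpow, hcube, ← Real.rpow_mul hx]
  norm_num

section TriangleJoin

variable {A B C : Type*} (R : Finset (A × B)) (S : Finset (B × C)) (T : Finset (A × C))

def triangleJoin : Set (A × B × C) :=
  {p | (p.1, p.2.1) ∈ R ∧ (p.2.1, p.2.2) ∈ S ∧ (p.1, p.2.2) ∈ T}

lemma triangleJoin_finite : (triangleJoin R S T).Finite :=
  ((R ×ˢ S).finite_toSet.image fun x => (x.1.1, x.1.2, x.2.2)).subset
    fun p hp => ⟨((p.1, p.2.1), (p.2.1, p.2.2)), Finset.mem_product.2 ⟨hp.1, hp.2.1⟩, rfl⟩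

variable {R S T} [DecidableEq B] {Q : Finset (A × B × C)}

lemma card_fiber_le_card_right (hQ : ↑Q ⊆ triangleJoin R S T) (b : B) :
    #{p ∈ Q | p.2.1 = b} ≤ #T := by
  refine card_le_card_of_injOn (fun p => (p.1, p.2.2))
    (fun p hp => (hQ (mem_filter.1 hp).1).2.2) ?_
  rintro ⟨a, b₁, c⟩ hp ⟨a', b₂, c'⟩ hq h
  simp only [coe_filter, Set.mem_ofPred_eq] at hp hq
  simp only [Prod.mk.injEq] at h ⊢
  exact ⟨h.1, hp.2.trans hq.2.symm, h.2⟩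

lemma card_fiber_le_card_mul_card (hQ : ↑Q ⊆ triangleJoin R S T) (b : B) :
    #{p ∈ Q | p.2.1 = b} ≤ #{e ∈ R | e.2 = b} * #{e ∈ S | e.1 = b} := by
  rw [← card_product]
  refine card_le_card_of_injOn (fun p => ((p.1, p.2.1), (p.2.1, p.2.2))) ?_ ?_
  · intro p hp
    obtain ⟨hpQ, rfl⟩ := mem_filter.1 hp
    have := hQ hpQ
    simp only [coe_product, coe_filter, Set.mem_prod, Set.mem_ofPred_eq]
    exact ⟨⟨this.1, trivial⟩, this.2.1, trivial⟩
  · rintro ⟨a, b₁, c⟩ - ⟨a', b₂, c'⟩ - h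
    simp only [Prod.mk.injEq] at h ⊢
    exact ⟨h.1.1, h.1.2, h.2.2⟩

lemma card_fiber_le_sqrt (hQ : ↑Q ⊆ triangleJoin R S T) (b : B) :
    (#{p ∈ Q | p.2.1 = b} : ℝ) ≤
      √(#T : ℝ) * (√(#{e ∈ R | e.2 = b} : ℝ) * √(#{e ∈ S | e.1 = b} : ℝ)) := by
  rw [← Real.sqrt_mul (by positivity), ← Real.sqrt_mul (by positivity)]
  exact Real.le_sqrt_mul_of_le_of_le (by positivity)
    (mod_cast card_fiber_le_card_right hQ b) (mod_cast card_fiber_le_card_mul_card hQ b)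

lemma sum_card_filter_le_card {ι κ : Type*} [DecidableEq κ] (s : Finset ι) (t : Finset κ)
    (g : ι → κ) : ∑ j ∈ t, #{i ∈ s | g i = j} ≤ #s :=
  (sum_card_fiberwise_eq_card_filter s t g).trans_le (card_filter_le _ _)

theorem card_le_sqrt_of_subset_triangleJoin (hQ : ↑Q ⊆ triangleJoin R S T) :
    (#Q : ℝ) ≤ √(#R * #S * #T) := by
  set I := Q.image (·.2.1)
  set r : B → ℝ := fun b => #{e ∈ R | e.2 = b}
  set s : B → ℝ := fun b => #{e ∈ S | e.1 = b}
  calc (#Q : ℝ) = ∑ b ∈ I, (#{p ∈ Q | p.2.1 = b} : ℝ) := by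
        exact_mod_cast card_eq_sum_card_fiberwise fun p hp => mem_image_of_mem _ hp
    _ ≤ ∑ b ∈ I, √(#T : ℝ) * (√(r b) * √(s b)) :=
        sum_le_sum fun b _ => card_fiber_le_sqrt hQ b
    _ = √(#T : ℝ) * ∑ b ∈ I, √(r b) * √(s b) := (mul_sum ..).symm
    _ ≤ √(#T : ℝ) * (√(∑ b ∈ I, r b) * √(∑ b ∈ I, s b)) := by
        gcongr
        exact Real.sum_sqrt_mul_sqrt_le I (fun _ => by positivity) (fun _ => by positivity)
    _ ≤ √(#T : ℝ) * (√(#R : ℝ) * √(#S : ℝ)) := by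
        gcongr
        · simp only [r]
          exact_mod_cast sum_card_filter_le_card R I Prod.snd
        · simp only [s]
          exact_mod_cast sum_card_filter_le_card S I Prod.fst
    _ = √(#R * #S * #T) := by
        rw [Real.sqrt_mul (by positivity), Real.sqrt_mul (by positivity)]
        ring

omit [DecidableEq B] in
theorem ncard_triangleJoin_le : ((triangleJoin R S T).ncard : ℝ) ≤ √(#R * #S * #T) := by
  classical
  rw [Set.ncard_eq_toFinset_card _ (triangleJoin_finite R S T)]
  exact card_le_sqrt_of_subset_triangleJoin (Set.Finite.coe_toFinset _).subset

end TriangleJoin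

/-- **AGM bound for the triangle query.** For finite binary relations `R ⊆ A × B`,
`S ⊆ B × C`, `T ⊆ A × C`, the triangle join
`Q_△ = {(a,b,c) : (a,b) ∈ R, (b,c) ∈ S, (a,c) ∈ T}` satisfies
`|Q_△| ≤ √(|R|·|S|·|T|)`; in particular, if `|R| = |S| = |T| = N` then
`|Q_△| ≤ N^(3/2)`. -/
theorem triangle_agm {A B C : Type*}
    (R : Finset (A × B)) (S : Finset (B × C)) (T : Finset (A × C)) :
    (({p : A × B × C | (p.1, p.2.1) ∈ R ∧ (p.2.1, p.2.2) ∈ S ∧ (p.1, p.2.2) ∈ T}).ncard : ℝ)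
        ≤ Real.sqrt ((R.card : ℝ) * (S.card : ℝ) * (T.card : ℝ)) ∧
      ∀ N : ℕ, R.card = N → S.card = N → T.card = N →
        (({p : A × B × C | (p.1, p.2.1) ∈ R ∧ (p.2.1, p.2.2) ∈ S ∧
            (p.1, p.2.2) ∈ T}).ncard : ℝ) ≤ (N : ℝ) ^ ((3 : ℝ) / 2) := by
  refine ⟨ncard_triangleJoin_le, fun N hR hS hT => ?_⟩
  calc _ ≤ √(#R * #S * #T) := ncard_triangleJoin_le
    _ = (N : ℝ) ^ ((3 : ℝ) / 2) := by
      rw [hR, hS, hT, Real.sqrt_mul_self_mul_self N.cast_nonneg]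
end

section
/- (Runtime bound for the delayed-computation triangle algorithm.) Let R ⊆ A × B, S ⊆ B × C, and T ⊆ A × C be finite binary relations. Let L_A = π_A(R) ∩ π_A(T), and for each a ∈ L_A let L_B^a = π_B(σ_{A=a}R) ∩ π_B(S). Then ∑_{a ∈ L_A} ∑_{b ∈ L_B^a} min(|π_C(σ_{B=b}S)|, |π_C(σ_{A=a}T)|) ≤ √(|R| · |S| · |T|). -/
/-!
Bound `min x y ≤ √x √y`, replace each projection size by the corresponding degree, and apply
Cauchy–Schwarz twice: over `b ∈ L_B^a`, using `|L_B^a| ≤ deg_R a` and that the `S`-degrees of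
distinct `b` sum to at most `|S|`; then over `a ∈ L_A`, where the `R`- and `T`-degrees sum to at
most `|R|` and `|T|`.
-/

open Finset

lemma sum_card_filter_fst_le {α β : Type*} [DecidableEq α] (R : Finset (α × β)) (s : Finset α) :
    ∑ a ∈ s, #{p ∈ R | p.1 = a} ≤ #R :=
  (sum_card_fiberwise_eq_card_filter R s Prod.fst).trans_le (card_filter_le _ _)

namespace Real

lemma min_le_sqrt_mul_sqrt {x y : ℝ} (hx : 0 ≤ x) (hy : 0 ≤ y) : min x y ≤ √x * √y := by
  rw [← sqrt_mul hx, le_sqrt (le_min hx hy) (mul_nonneg hx hy), sq]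
  exact mul_le_mul (min_le_left x y) (min_le_right x y) (le_min hx hy) hx

lemma sum_min_le_sqrt_mul_sqrt {ι : Type*} (s : Finset ι) {x : ι → ℝ} {y : ℝ}
    (hx : ∀ i, 0 ≤ x i) (hy : 0 ≤ y) :
    ∑ i ∈ s, min (x i) y ≤ √(∑ i ∈ s, x i) * √(#s * y) :=
  calc ∑ i ∈ s, min (x i) y
      ≤ ∑ i ∈ s, √(x i) * √y := sum_le_sum fun i _ ↦ min_le_sqrt_mul_sqrt (hx i) hy
    _ ≤ √(∑ i ∈ s, x i) * √(∑ _i ∈ s, y) := sum_sqrt_mul_sqrt_le s hx fun _ ↦ hy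
    _ = √(∑ i ∈ s, x i) * √(#s * y) := by rw [sum_const, nsmul_eq_mul]

end Real

lemma sum_min_card_filter_fst_le {β γ : Type*} [DecidableEq β] (S : Finset (β × γ))
    (t : Finset β) {y : ℝ} (hy : 0 ≤ y) :
    ∑ b ∈ t, min (#{p ∈ S | p.1 = b} : ℝ) y ≤ √(#S) * √(#t * y) := by
  refine (Real.sum_min_le_sqrt_mul_sqrt t (fun _ ↦ Nat.cast_nonneg _) hy).trans ?_
  gcongr
  exact_mod_cast sum_card_filter_fst_le S t

/-- **Runtime bound for the delayed-computation triangle algorithm.**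
With `L_A = π_A(R) ∩ π_A(T)` and, for each `a ∈ L_A`,
`L_B^a = π_B(σ_{A=a}R) ∩ π_B(S)`, we have
`∑_{a ∈ L_A} ∑_{b ∈ L_B^a} min(|π_C(σ_{B=b}S)|, |π_C(σ_{A=a}T)|) ≤ √(|R|·|S|·|T|)`. -/
theorem delayed_computation_runtime {A B C : Type*}
    [DecidableEq A] [DecidableEq B] [DecidableEq C]
    (R : Finset (A × B)) (S : Finset (B × C)) (T : Finset (A × C)) :
    (∑ a ∈ R.image Prod.fst ∩ T.image Prod.fst,
        ∑ b ∈ (R.filter (fun p => p.1 = a)).image Prod.snd ∩ S.image Prod.fst,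
          (min ((S.filter (fun p => p.1 = b)).image Prod.snd).card
            (((T.filter (fun p => p.1 = a)).image Prod.snd).card) : ℕ) : ℝ)
      ≤ Real.sqrt ((R.card : ℝ) * (S.card : ℝ) * (T.card : ℝ)) := by
  have inner (a : A) (t : Finset B) (ht : t ⊆ (R.filter (fun p => p.1 = a)).image Prod.snd) :
      ∑ b ∈ t, (min (#((S.filter (fun p => p.1 = b)).image Prod.snd))
          (#((T.filter (fun p => p.1 = a)).image Prod.snd)) : ℝ)
        ≤ √(#S) * (√(#{p ∈ R | p.1 = a}) * √(#{p ∈ T | p.1 = a})) := by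
    have ht_card : (#t : ℝ) ≤ #{p ∈ R | p.1 = a} :=
      mod_cast (card_le_card ht).trans card_image_le
    calc _ ≤ ∑ b ∈ t, min (#{p ∈ S | p.1 = b} : ℝ) #{p ∈ T | p.1 = a} := by
          gcongr <;> exact card_image_le
      _ ≤ √(#S) * √(#t * #{p ∈ T | p.1 = a}) := sum_min_card_filter_fst_le S t (Nat.cast_nonneg _)
      _ ≤ √(#S) * √(#{p ∈ R | p.1 = a} * #{p ∈ T | p.1 = a}) := by gcongr
      _ = √(#S) * (√(#{p ∈ R | p.1 = a}) * √(#{p ∈ T | p.1 = a})) := by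
          rw [Real.sqrt_mul (Nat.cast_nonneg _)]
  calc _ ≤ ∑ a ∈ R.image Prod.fst ∩ T.image Prod.fst,
          √(#S) * (√(#{p ∈ R | p.1 = a}) * √(#{p ∈ T | p.1 = a})) := by
        push_cast
        exact sum_le_sum fun a _ ↦ inner a _ inter_subset_left
    _ ≤ √(#S) * (√(#R) * √(#T)) := by
        rw [← mul_sum]
        gcongr
        refine (Real.sum_sqrt_mul_sqrt_le _ (fun _ ↦ Nat.cast_nonneg _)
          fun _ ↦ Nat.cast_nonneg _).trans ?_
        gcongr <;> exact_mod_cast sum_card_filter_fst_le _ _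
    _ = √(#R * #S * #T) := by
        rw [Real.sqrt_mul (by positivity), Real.sqrt_mul (by positivity)]
        ring
end

section
/- (AGM bound for Loomis–Whitney queries; discrete Loomis–Whitney inequality.) Let n ≥ 2, and for each i ∈ [n] let R_{-i} be a finite relation on the attribute set [n] ∖ {i} over a domain D, i.e. a finite set of tuples t : [n]∖{i} → D. Then the natural join satisfies |⋈_{i=1}^n R_{-i}| ≤ ∏_{i=1}^n |R_{-i}|^{1/(n-1)}. In particular, if |R_{-i}| = N for all i, then the join has at most N^{1+1/(n-1)} tuples. -/
/-!
Induction on the dimension, with `πᵢ S = S.image (Fin.removeNth i)` the projection forgetting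
coordinate `i`. Slice `S ⊆ α ^ (n + 2)` by the value `a` of the first coordinate.
The slice `S_a` lies in the projection `π₀ S`, and by induction `|S_a| ^ n` is at most the product
of the projections of `S_a`, which are slices of the projections `π_{k+1} S`. Hence
`|S_a| ≤ |π₀ S| ^ p * ∏ₖ |(π_{k+1} S)_a| ^ p` with `p = 1 / (n + 1)`, and summing over `a` with
Hölder's inequality for `n + 1` equal exponents `p` gives `|S| ≤ ∏ᵢ |πᵢ S| ^ p`.
The natural join is such an `S`, with its projections inside the relations `R_{-i}`.
-/

open Finset
open scoped ENNReal

theorem ENNReal.sum_prod_rpow_le_prod_sum_rpow {α ι : Type*} (s : Finset α) (t : Finset ι)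
    (f : ι → α → ℝ≥0∞) {p : ι → ℝ} (hp : ∑ i ∈ t, p i = 1) (hp₀ : ∀ i ∈ t, 0 ≤ p i) :
    ∑ a ∈ s, ∏ i ∈ t, f i a ^ p i ≤ ∏ i ∈ t, (∑ a ∈ s, f i a) ^ p i := by
  let : MeasurableSpace s := ⊤
  simpa only [MeasureTheory.lintegral_count, tsum_fintype, s.sum_coe_sort,
    s.sum_coe_sort fun a ↦ ∏ i ∈ t, f i a ^ p i] using
    ENNReal.lintegral_prod_norm_pow_le (μ := .count) t (f := fun i (a : s) ↦ f i a)
      (fun i _ ↦ measurable_from_top.aemeasurable) hp hp₀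

namespace LoomisWhitney

variable {α : Type*} {n : ℕ}

section DecidableEq

variable [DecidableEq α]

def slice (S : Finset (Fin (n + 1) → α)) (a : α) : Finset (Fin n → α) :=
  {t ∈ S | t 0 = a}.image Fin.tail

theorem card_slice (S : Finset (Fin (n + 1) → α)) (a : α) : #(slice S a) = #{t ∈ S | t 0 = a} :=
  card_image_of_injOn fun t ht u hu htu ↦ by
    simp only [coe_filter, Set.mem_ofPred_eq] at ht hu
    rw [← Fin.cons_self_tail t, ← Fin.cons_self_tail u, htu, ht.2, hu.2]

theorem sum_card_slice (S : Finset (Fin (n + 1) → α)) :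
    ∑ a ∈ S.image (· 0), #(slice S a) = #S := by
  simp only [card_slice]
  exact (card_eq_sum_card_fiberwise fun t ht ↦ mem_image_of_mem _ ht).symm

theorem sum_card_slice_le (S : Finset (Fin (n + 1) → α)) (s : Finset α) :
    ∑ a ∈ s, #(slice S a) ≤ #S := by
  simp only [card_slice, sum_card_fiberwise_eq_card_filter]
  exact card_filter_le _ _

theorem slice_subset_image_removeNth_zero (S : Finset (Fin (n + 1) → α)) (a : α) :
    slice S a ⊆ S.image (Fin.removeNth 0) := by
  simp only [slice, subset_iff, mem_image, mem_filter]
  rintro _ ⟨t, ⟨ht, -⟩, rfl⟩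
  exact ⟨t, ht, Fin.removeNth_zero t⟩

theorem image_removeNth_slice_subset (S : Finset (Fin (n + 2) → α)) (a : α) (k : Fin (n + 1)) :
    (slice S a).image (Fin.removeNth k) ⊆ slice (S.image (Fin.removeNth k.succ)) a := by
  simp only [slice, image_image, subset_iff, mem_image, mem_filter]
  rintro _ ⟨t, ⟨ht, rfl⟩, rfl⟩
  refine ⟨Fin.removeNth k.succ t, ⟨⟨t, ht, rfl⟩, ?_⟩, ?_⟩
  · simp [Fin.removeNth]
  · funext j
    simp [Fin.removeNth, Fin.tail, Fin.succ_succAbove_succ]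

theorem card_slice_le
    (ih : ∀ T : Finset (Fin (n + 1) → α), #T ^ n ≤ ∏ k, #(T.image (Fin.removeNth k)))
    (S : Finset (Fin (n + 2) → α)) (a : α) :
    (#(slice S a) : ℝ≥0∞) ≤ (#(S.image (Fin.removeNth 0)) : ℝ≥0∞) ^ ((n + 1 : ℕ)⁻¹ : ℝ) *
      ∏ k : Fin (n + 1),
        (#(slice (S.image (Fin.removeNth k.succ)) a) : ℝ≥0∞) ^ ((n + 1 : ℕ)⁻¹ : ℝ) := by
  set p : ℝ := ((n + 1 : ℕ) : ℝ)⁻¹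
  set T := slice S a
  have hT : #T ^ n ≤ ∏ k : Fin (n + 1), #(slice (S.image (Fin.removeNth k.succ)) a) :=
    (ih T).trans <| prod_le_prod' fun k _ ↦ card_le_card (image_removeNth_slice_subset S a k)
  calc (#T : ℝ≥0∞) = ((#T : ℝ≥0∞) ^ (n + 1)) ^ p :=
        (ENNReal.pow_rpow_inv_natCast n.succ_ne_zero _).symm
    _ = (#T : ℝ≥0∞) ^ p * ((#T : ℝ≥0∞) ^ n) ^ p := by
        rw [pow_succ', ENNReal.mul_rpow_of_nonneg _ _ (by positivity)]
    _ ≤ (#(S.image (Fin.removeNth 0)) : ℝ≥0∞) ^ p *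
          (∏ k : Fin (n + 1), (#(slice (S.image (Fin.removeNth k.succ)) a) : ℝ≥0∞)) ^ p := by
        gcongr
        · exact slice_subset_image_removeNth_zero S a
        · exact_mod_cast hT
    _ = _ := by rw [ENNReal.prod_rpow_of_nonneg (by positivity)]

theorem card_le_prod_card_image_removeNth_rpow
    (ih : ∀ T : Finset (Fin (n + 1) → α), #T ^ n ≤ ∏ k, #(T.image (Fin.removeNth k)))
    (S : Finset (Fin (n + 2) → α)) :
    (#S : ℝ≥0∞) ≤ ∏ i, (#(S.image (Fin.removeNth i)) : ℝ≥0∞) ^ ((n + 1 : ℕ)⁻¹ : ℝ) := by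
  set p : ℝ := ((n + 1 : ℕ) : ℝ)⁻¹
  have hp : ∑ _k : Fin (n + 1), p = 1 := by
    rw [sum_const, card_univ, Fintype.card_fin, nsmul_eq_mul, mul_inv_cancel₀ (by positivity)]
  let f (k : Fin (n + 1)) (a : α) : ℝ≥0∞ := #(slice (S.image (Fin.removeNth k.succ)) a)
  calc (#S : ℝ≥0∞) = ∑ a ∈ S.image (· 0), (#(slice S a) : ℝ≥0∞) := by
        exact_mod_cast (sum_card_slice S).symm
    _ ≤ ∑ a ∈ S.image (· 0), (#(S.image (Fin.removeNth 0)) : ℝ≥0∞) ^ p * ∏ k, f k a ^ p :=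
        sum_le_sum fun a _ ↦ card_slice_le ih S a
    _ ≤ (#(S.image (Fin.removeNth 0)) : ℝ≥0∞) ^ p * ∏ k, (∑ a ∈ S.image (· 0), f k a) ^ p := by
        rw [← mul_sum]
        gcongr
        exact ENNReal.sum_prod_rpow_le_prod_sum_rpow _ _ f hp fun _ _ ↦ by positivity
    _ ≤ (#(S.image (Fin.removeNth 0)) : ℝ≥0∞) ^ p *
          ∏ k : Fin (n + 1), (#(S.image (Fin.removeNth k.succ)) : ℝ≥0∞) ^ p := by
        gcongr with k
        simp only [f]
        exact_mod_cast sum_card_slice_le _ _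
    _ = _ := (Fin.prod_univ_succ fun i ↦ (#(S.image (Fin.removeNth i)) : ℝ≥0∞) ^ p).symm

theorem card_pow_le_prod_card_image_removeNth (hn : 1 ≤ n) (S : Finset (Fin (n + 1) → α)) :
    #S ^ n ≤ ∏ i, #(S.image (Fin.removeNth i)) := by
  induction n, hn using Nat.le_induction with
  | base =>
    rw [pow_one, Fin.prod_univ_two, ← card_product]
    refine card_le_card_of_injOn (fun t ↦ (Fin.removeNth 0 t, Fin.removeNth 1 t))
      (fun t ht ↦ mem_product.2 ⟨mem_image_of_mem _ ht, mem_image_of_mem _ ht⟩) ?_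
    intro t _ u _ htu
    obtain ⟨h₀, h₁⟩ := Prod.ext_iff.1 htu
    funext j
    fin_cases j
    exacts [congrFun h₁ 0, congrFun h₀ 0]
  | succ n hn ih =>
    have := card_le_prod_card_image_removeNth_rpow ih S
    rw [ENNReal.prod_rpow_of_nonneg (inv_nonneg.2 (Nat.cast_nonneg _)),
      ENNReal.le_rpow_inv_iff (by positivity), ENNReal.rpow_natCast] at this
    exact_mod_cast this

theorem card_image_removeNth_le_ncard {i : Fin (n + 1)} {R : Set ({j // j ≠ i} → α)}
    (hR : R.Finite) {S : Finset (Fin (n + 1) → α)}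
    (hS : ∀ t ∈ S, (fun j : {j // j ≠ i} ↦ t j.1) ∈ R) :
    #(S.image (Fin.removeNth i)) ≤ R.ncard := by
  rw [← Set.ncard_coe_finset]
  calc (↑(S.image (Fin.removeNth i)) : Set (Fin n → α)).ncard
      ≤ ((· ∘ finSuccAboveEquiv i) '' R).ncard := by
        refine Set.ncard_le_ncard ?_ (hR.image _)
        rw [coe_image]
        rintro _ ⟨t, ht, rfl⟩
        exact ⟨_, hS t ht, rfl⟩
    _ ≤ R.ncard := Set.ncard_image_le hR

end DecidableEq

theorem ncard_join_pow_le_prod_ncard (hn : 1 ≤ n) {R : (i : Fin (n + 1)) → Set ({j // j ≠ i} → α)}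
    (hR : ∀ i, (R i).Finite) :
    {t : Fin (n + 1) → α | ∀ i, (fun j : {j // j ≠ i} ↦ t j.1) ∈ R i}.ncard ^ n
      ≤ ∏ i, (R i).ncard := by
  classical
  set J := {t : Fin (n + 1) → α | ∀ i, (fun j : {j // j ≠ i} ↦ t j.1) ∈ R i}
  rcases J.finite_or_infinite with hJ | hJ
  · rw [Set.ncard_eq_toFinset_card J hJ]
    refine (card_pow_le_prod_card_image_removeNth hn _).trans <|
      prod_le_prod' fun i _ ↦ card_image_removeNth_le_ncard (hR i) fun t ht ↦ ?_
    exact hJ.mem_toFinset.1 ht i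
  · rw [hJ.ncard, zero_pow (by omega)]
    exact Nat.zero_le _

end LoomisWhitney

/-- **AGM bound for Loomis–Whitney queries (discrete Loomis–Whitney inequality).**
For `n ≥ 2` and finite relations `R_{-i}` on attribute sets `[n] ∖ {i}`,
`|⋈_{i} R_{-i}| ≤ ∏_i |R_{-i}| ^ (1/(n-1))`; in particular if all `|R_{-i}| = N`
then the join has at most `N^(1 + 1/(n-1))` tuples. -/
theorem loomis_whitney {D : Type*} (n : ℕ) (hn : 2 ≤ n)
    (R : (i : Fin n) → Set ({j : Fin n // j ≠ i} → D))
    (hR : ∀ i, (R i).Finite) :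
    (({t : Fin n → D | ∀ i : Fin n,
        (fun j : {j : Fin n // j ≠ i} => t j.1) ∈ R i}).ncard : ℝ)
        ≤ ∏ i : Fin n, ((R i).ncard : ℝ) ^ ((1 : ℝ) / ((n : ℝ) - 1)) ∧
      ∀ N : ℕ, (∀ i : Fin n, (R i).ncard = N) →
        (({t : Fin n → D | ∀ i : Fin n,
            (fun j : {j : Fin n // j ≠ i} => t j.1) ∈ R i}).ncard : ℝ)
          ≤ (N : ℝ) ^ ((1 : ℝ) + 1 / ((n : ℝ) - 1)) := by
  obtain ⟨m, rfl⟩ : ∃ m, n = m + 1 := ⟨n - 1, by omega⟩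
  have hm : ((m + 1 : ℕ) : ℝ) - 1 = m := by push_cast; ring
  have hm₀ : (0 : ℝ) < m := by exact_mod_cast (by omega : 0 < m)
  simp only [hm, one_div]
  have hJ : (({t : Fin (m + 1) → D | ∀ i, (fun j : {j // j ≠ i} => t j.1) ∈ R i}).ncard : ℝ)
      ≤ ∏ i, ((R i).ncard : ℝ) ^ (m⁻¹ : ℝ) := by
    rw [Real.finsetProd_rpow _ _ fun _ _ ↦ by positivity,
      Real.le_rpow_inv_iff_of_pos (by positivity) (by positivity) hm₀, Real.rpow_natCast]
    exact_mod_cast LoomisWhitney.ncard_join_pow_le_prod_ncard (by omega) hR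
  refine ⟨hJ, fun N hN ↦ hJ.trans_eq ?_⟩
  rw [prod_congr rfl fun i _ ↦ by rw [hN i], prod_const, card_univ, Fintype.card_fin,
    ← Real.rpow_natCast, ← Real.rpow_mul (Nat.cast_nonneg N)]
  congr 1
  field_simp
  push_cast
  ring
end

section
/- (AGM bound for clique queries.) Let n ≥ 3, and for each pair i < j in [n] let R_{i,j} be a finite binary relation over a domain D on the attribute pair {i, j}, i.e. a finite set of pairs in D × D. Then the natural join K_n = ⋈_{i<j} R_{i,j}, consisting of all tuples t : [n] → D with (t(i), t(j)) ∈ R_{i,j} for all i < j, satisfies |K_n| ≤ (∏_{i<j} |R_{i,j}|)^{1/(n-1)}. In particular, if |R_{i,j}| = N for all i < j, then |K_n| ≤ N^{n/2}. -/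
/-!
Projecting a finite set `S` of tuples on the vertex set `A` along each coordinate gives the
discrete Loomis–Whitney inequality `|S| ^ (|A| - 1) ≤ ∏ᵢ |πᵢ S|`: slice `S` by the value of one
coordinate, apply induction to each slice and recombine the slices with Hölder's inequality.
If `S` lies in the clique join on `A`, then `πₖ S` lies in the clique join on `A \ {k}`, so by
induction on `|A|` its size to the power `|A| - 2` is at most the product of `|R p|` over the
pairs `p` avoiding `k`. Multiplying over `k` counts each pair `|A| - 2` times, and taking
`(|A| - 2)`-th roots yields `|S| ^ (|A| - 1) ≤ ∏ₚ |R p|`.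
-/

open Finset MeasureTheory
open scoped ENNReal

theorem ENNReal.sum_prod_rpow_le {α ι : Type*} (s : Finset ι) (t : Finset α) (f : ι → α → ℝ≥0∞)
    {p : ι → ℝ} (hp : ∑ i ∈ s, p i = 1) (hp₀ : ∀ i ∈ s, 0 ≤ p i) :
    ∑ a ∈ t, ∏ i ∈ s, f i a ^ p i ≤ ∏ i ∈ s, (∑ a ∈ t, f i a) ^ p i := by
  let _ : MeasurableSpace α := ⊤
  have : DiscreteMeasurableSpace α := ⟨fun _ => trivial⟩
  simpa [lintegral_finset] using ENNReal.lintegral_prod_norm_pow_le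
    (μ := Measure.count.restrict (t : Set α)) s (fun _ _ => Measurable.of_discrete.aemeasurable)
    hp hp₀

theorem ENNReal.sum_pow_le_mul_prod_sum {α ι : Type*} {s : Finset ι} (hs : s.Nonempty)
    (t : Finset α) {c : α → ℝ≥0∞} (G : ℝ≥0∞) {f : ι → α → ℝ≥0∞}
    (hc : ∀ a ∈ t, c a ^ #s ≤ G * ∏ i ∈ s, f i a) :
    (∑ a ∈ t, c a) ^ #s ≤ G * ∏ i ∈ s, ∑ a ∈ t, f i a := by
  have hm : (0 : ℝ) < #s := by exact_mod_cast hs.card_pos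
  have hq : (0 : ℝ) ≤ (#s : ℝ)⁻¹ := by positivity
  rw [← ENNReal.rpow_natCast, ← ENNReal.le_rpow_inv_iff hm, ENNReal.mul_rpow_of_nonneg _ _ hq,
    ← ENNReal.prod_rpow_of_nonneg hq]
  calc ∑ a ∈ t, c a
      ≤ ∑ a ∈ t, G ^ (#s : ℝ)⁻¹ * ∏ i ∈ s, f i a ^ (#s : ℝ)⁻¹ := by
        gcongr with a ha
        rw [ENNReal.prod_rpow_of_nonneg hq, ← ENNReal.mul_rpow_of_nonneg _ _ hq,
          ENNReal.le_rpow_inv_iff hm, ENNReal.rpow_natCast]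
        exact hc a ha
    _ = G ^ (#s : ℝ)⁻¹ * ∑ a ∈ t, ∏ i ∈ s, f i a ^ (#s : ℝ)⁻¹ := (mul_sum ..).symm
    _ ≤ G ^ (#s : ℝ)⁻¹ * ∏ i ∈ s, (∑ a ∈ t, f i a) ^ (#s : ℝ)⁻¹ := by
        gcongr
        refine ENNReal.sum_prod_rpow_le s t f ?_ fun _ _ => hq
        rw [sum_const, nsmul_eq_mul, mul_inv_cancel₀ hm.ne']

theorem Nat.sum_pow_le_mul_prod_sum {α ι : Type*} {s : Finset ι} (hs : s.Nonempty)
    (t : Finset α) {c : α → ℕ} (G : ℕ) {f : ι → α → ℕ}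
    (hc : ∀ a ∈ t, c a ^ #s ≤ G * ∏ i ∈ s, f i a) :
    (∑ a ∈ t, c a) ^ #s ≤ G * ∏ i ∈ s, ∑ a ∈ t, f i a := by
  have := ENNReal.sum_pow_le_mul_prod_sum hs t (c := fun a => c a) G (f := fun i a => f i a)
    fun a ha => by exact_mod_cast hc a ha
  exact_mod_cast this

section Projection

variable {ι D : Type*} [DecidableEq ι] [DecidableEq (ι → D)]

/-- Tuples with coordinate `i` overwritten by the dummy value `d` stand for tuples on `ι \ {i}`. -/
def forgetCoord (d : D) (i : ι) (S : Finset (ι → D)) : Finset (ι → D) :=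
  S.image (Function.update · i d)

theorem forgetCoord_filter_eq [DecidableEq D] {d : D} {i k : ι} (hik : i ≠ k)
    (S : Finset (ι → D)) (v : D) :
    forgetCoord d i {t ∈ S | t k = v} = {t ∈ forgetCoord d i S | t k = v} := by
  ext u
  simp only [forgetCoord, mem_image, mem_filter]
  constructor
  · rintro ⟨t, ⟨ht, rfl⟩, rfl⟩
    exact ⟨⟨t, ht, rfl⟩, Function.update_of_ne hik.symm _ _⟩
  · rintro ⟨⟨t, ht, rfl⟩, hv⟩
    exact ⟨t, ⟨ht, by rwa [Function.update_of_ne hik.symm] at hv⟩, rfl⟩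

theorem card_filter_le_card_forgetCoord [DecidableEq D] (d : D) (i : ι) (S : Finset (ι → D))
    (v : D) :
    #{t ∈ S | t i = v} ≤ #(forgetCoord d i S) := by
  refine card_le_card_of_injOn _ (fun t ht => mem_image_of_mem _ (mem_filter.mp ht).1) ?_
  intro t ht t' ht' h
  have hti : t i = t' i := (mem_filter.mp ht).2.trans (mem_filter.mp ht').2.symm
  funext j
  by_cases hj : j = i
  · exact hj ▸ hti
  · simpa [hj] using congrFun h j

theorem forgetCoord_eq_of_notMem_erase {d : D} {k : ι} {A : Finset ι} {S : Finset (ι → D)}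
    (hSA : ∀ t ∈ S, ∀ t' ∈ S, ∀ j ∉ A, t j = t' j) :
    ∀ t ∈ forgetCoord d k S, ∀ t' ∈ forgetCoord d k S, ∀ j ∉ A.erase k, t j = t' j := by
  simp only [forgetCoord, forall_mem_image]
  intro t ht t' ht' j hj
  by_cases hjk : j = k
  · simp [hjk]
  · simpa [hjk] using hSA t ht t' ht' j fun h => hj (mem_erase.mpr ⟨hjk, h⟩)

/-- Discrete Loomis–Whitney inequality. -/
theorem card_pow_le_prod_card_forgetCoord [DecidableEq D] (d : D) {A : Finset ι}
    {S : Finset (ι → D)} (hS : S.Nonempty) (hSA : ∀ t ∈ S, ∀ t' ∈ S, ∀ j ∉ A, t j = t' j) :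
    #S ^ (#A - 1) ≤ ∏ i ∈ A, #(forgetCoord d i S) := by
  induction A using Finset.induction_on generalizing S with
  | empty => simp
  | insert i₀ B hi₀ ih =>
    rw [prod_insert hi₀, card_insert_of_notMem hi₀, Nat.add_sub_cancel]
    rcases B.eq_empty_or_nonempty with rfl | hB
    · simpa [forgetCoord, Nat.one_le_iff_ne_zero] using hS.ne_empty
    -- Each slice `{t ∈ S | t i₀ = v}` agrees outside `B`, and its projections along `i ∈ B`
    -- are the disjoint pieces `{u ∈ πᵢ S | u i₀ = v}` of `πᵢ S`.
    set V := S.image (· i₀)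
    rw [card_eq_sum_card_fiberwise (f := (· i₀)) (t := V) fun t ht => mem_image_of_mem _ ht]
    refine (Nat.sum_pow_le_mul_prod_sum hB V #(forgetCoord d i₀ S)
      (f := fun i v => #(forgetCoord d i {t ∈ S | t i₀ = v})) fun v hv => ?_).trans ?_
    · obtain ⟨t, ht, rfl⟩ := mem_image.mp hv
      conv_lhs => rw [← Nat.sub_add_cancel hB.card_pos, pow_succ']
      refine Nat.mul_le_mul (card_filter_le_card_forgetCoord d i₀ S _) (ih ⟨t, by simp [ht]⟩ ?_)
      intro u hu u' hu' j hj
      by_cases hji : j = i₀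
      · subst hji; rw [(mem_filter.mp hu).2, (mem_filter.mp hu').2]
      · exact hSA u (mem_filter.mp hu).1 u' (mem_filter.mp hu').1 j (by simp [hji, hj])
    · gcongr with i hi
      have hii₀ : i ≠ i₀ := fun h => hi₀ (h ▸ hi)
      simp_rw [forgetCoord_filter_eq hii₀, sum_card_fiberwise_eq_card_filter]
      exact card_filter_le _ _

end Projection

theorem prod_prod_filter_lt_erase {ι M : Type*} [LinearOrder ι] [CommMonoid M] (A : Finset ι)
    (w : ι × ι → M) :
    ∏ k ∈ A, ∏ p ∈ {p ∈ A.erase k ×ˢ A.erase k | p.1 < p.2}, w p =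
      ∏ p ∈ {p ∈ A ×ˢ A | p.1 < p.2}, w p ^ (#A - 2) := by
  have hpairs : ∀ k, {p ∈ A.erase k ×ˢ A.erase k | p.1 < p.2} =
      {p ∈ {p ∈ A ×ˢ A | p.1 < p.2} | k ≠ p.1 ∧ k ≠ p.2} := by
    intro k; ext p; simp only [mem_filter, mem_product, mem_erase]; tauto
  rw [prod_congr rfl fun k _ => by rw [hpairs, prod_filter], prod_comm]
  refine prod_congr rfl fun p hp => ?_
  simp only [mem_filter, mem_product] at hp
  rw [← prod_filter, prod_const]
  congr 1
  have : {k ∈ A | k ≠ p.1 ∧ k ≠ p.2} = (A.erase p.1).erase p.2 := by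
    ext k; simp only [mem_filter, mem_erase]; tauto
  rw [this, card_erase_of_mem (mem_erase.mpr ⟨hp.2.ne', hp.1.2⟩), card_erase_of_mem hp.1.1]
  rfl

theorem card_le_card_of_forall_mem_pair {ι D : Type*} {i j : ι} {S : Finset (ι → D)}
    {R : Finset (D × D)} (hSA : ∀ t ∈ S, ∀ t' ∈ S, ∀ k, k ≠ i → k ≠ j → t k = t' k)
    (hSR : ∀ t ∈ S, (t i, t j) ∈ R) : #S ≤ #R := by
  refine card_le_card_of_injOn (fun t => (t i, t j)) hSR fun t ht t' ht' h => funext fun k => ?_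
  obtain ⟨hi, hj⟩ := Prod.ext_iff.mp h
  by_cases hki : k = i
  · exact hki ▸ hi
  by_cases hkj : k = j
  · exact hkj ▸ hj
  exact hSA t ht t' ht' k hki hkj

theorem filter_lt_pair_eq {ι : Type*} [LinearOrder ι] {i j : ι} (hij : i < j) :
    {p ∈ ({i, j} : Finset ι) ×ˢ {i, j} | p.1 < p.2} = {(i, j)} := by
  ext ⟨a, b⟩
  simp only [mem_filter, mem_product, mem_insert, mem_singleton, Prod.mk.injEq]
  grind

theorem Set.finite_setOf_forall_lt_mem {ι D : Type*} [Finite ι] [LinearOrder ι] [Nontrivial ι]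
    (R : ι → ι → Finset (D × D)) :
    {t : ι → D | ∀ i j, i < j → (t i, t j) ∈ R i j}.Finite := by
  refine (Set.Finite.pi (t := fun i => ⋃ j, (Prod.fst '' (R i j : Set (D × D)) ∪
    Prod.snd '' (R j i : Set (D × D)))) fun i => Set.finite_iUnion fun j =>
      ((R i j).finite_toSet.image _).union ((R j i).finite_toSet.image _)).subset ?_
  intro t ht i _
  obtain ⟨j, hji⟩ := exists_ne i
  rw [Set.mem_iUnion]
  rcases hji.lt_or_gt with h | h
  · exact ⟨j, Or.inr ⟨_, ht j i h, rfl⟩⟩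
  · exact ⟨j, Or.inl ⟨_, ht i j h, rfl⟩⟩

theorem card_pow_le_prod_card_of_forall_lt_mem {ι D : Type*} [LinearOrder ι]
    (R : ι → ι → Finset (D × D)) {A : Finset ι} (hA : 2 ≤ #A) {S : Finset (ι → D)}
    (hSA : ∀ t ∈ S, ∀ t' ∈ S, ∀ j ∉ A, t j = t' j)
    (hSR : ∀ t ∈ S, ∀ i ∈ A, ∀ j ∈ A, i < j → (t i, t j) ∈ R i j) :
    #S ^ (#A - 1) ≤ ∏ p ∈ {p ∈ A ×ˢ A | p.1 < p.2}, #(R p.1 p.2) := by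
  classical
  induction A using Finset.strongInduction generalizing S with
  | H A ih =>
  rcases hA.eq_or_lt with hA2 | hA3
  · obtain ⟨i, j, hij, rfl⟩ : ∃ i j, i < j ∧ A = {i, j} := by
      obtain ⟨a, b, hab, rfl⟩ := card_eq_two.mp hA2.symm
      rcases hab.lt_or_gt with h | h
      · exact ⟨a, b, h, rfl⟩
      · exact ⟨b, a, h, pair_comm a b⟩
    rw [← hA2, filter_lt_pair_eq hij, prod_singleton, pow_one]
    exact card_le_card_of_forall_mem_pair
      (fun t ht t' ht' k hki hkj => hSA t ht t' ht' k (by simp [hki, hkj]))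
      fun t ht => hSR t ht i (by simp) j (by simp) hij
  rcases S.eq_empty_or_nonempty with rfl | hS
  · simp [zero_pow (by omega : #A - 1 ≠ 0)]
  obtain ⟨k₀, -⟩ := card_pos.mp (by omega : 0 < #A)
  obtain ⟨d⟩ : Nonempty D := ⟨hS.choose k₀⟩
  have hproj : ∀ k ∈ A, #(forgetCoord d k S) ^ (#A - 2) ≤
      ∏ p ∈ {p ∈ A.erase k ×ˢ A.erase k | p.1 < p.2}, #(R p.1 p.2) := by
    intro k hk
    have hcard := card_erase_of_mem hk
    have := ih (A.erase k) (erase_ssubset hk) (by omega) (S := forgetCoord d k S)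
      (forgetCoord_eq_of_notMem_erase hSA) ?_
    · rwa [hcard, Nat.sub_sub] at this
    · simp only [forgetCoord, forall_mem_image]
      intro t ht i hi j hj hij
      rw [Function.update_of_ne (ne_of_mem_erase hi), Function.update_of_ne (ne_of_mem_erase hj)]
      exact hSR t ht i (mem_of_mem_erase hi) j (mem_of_mem_erase hj) hij
  refine (Nat.pow_le_pow_iff_left (by omega : #A - 2 ≠ 0)).mp ?_
  calc (#S ^ (#A - 1)) ^ (#A - 2)
      ≤ (∏ k ∈ A, #(forgetCoord d k S)) ^ (#A - 2) := by
        gcongr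
        exact card_pow_le_prod_card_forgetCoord _ hS hSA
    _ = ∏ k ∈ A, #(forgetCoord d k S) ^ (#A - 2) := (prod_pow ..).symm
    _ ≤ ∏ k ∈ A, ∏ p ∈ {p ∈ A.erase k ×ˢ A.erase k | p.1 < p.2}, #(R p.1 p.2) :=
        prod_le_prod' hproj
    _ = (∏ p ∈ {p ∈ A ×ˢ A | p.1 < p.2}, #(R p.1 p.2)) ^ (#A - 2) := by
        rw [prod_prod_filter_lt_erase, prod_pow]

/-- **AGM bound for clique queries.** For `n ≥ 3` and finite binary relations
`R i j ⊆ D × D` on each attribute pair `i < j`, the clique join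
`K_n = {t : [n] → D | ∀ i < j, (t i, t j) ∈ R i j}` satisfies
`|K_n| ≤ (∏_{i<j} |R i j|) ^ (1/(n-1))`; in particular if all `|R i j| = N`
then `|K_n| ≤ N^(n/2)`. -/
theorem clique_agm {D : Type*} (n : ℕ) (hn : 3 ≤ n)
    (R : Fin n → Fin n → Finset (D × D)) :
    (({t : Fin n → D | ∀ i j : Fin n, i < j → (t i, t j) ∈ R i j}).ncard : ℝ)
        ≤ (∏ p ∈ Finset.univ.filter (fun p : Fin n × Fin n => p.1 < p.2),
            ((R p.1 p.2).card : ℝ)) ^ ((1 : ℝ) / ((n : ℝ) - 1)) ∧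
      ∀ N : ℕ, (∀ i j : Fin n, i < j → (R i j).card = N) →
        (({t : Fin n → D | ∀ i j : Fin n, i < j → (t i, t j) ∈ R i j}).ncard : ℝ)
          ≤ (N : ℝ) ^ ((n : ℝ) / 2) := by
  set K := {t : Fin n → D | ∀ i j : Fin n, i < j → (t i, t j) ∈ R i j}
  set P := Finset.univ.filter (fun p : Fin n × Fin n => p.1 < p.2) with hP
  have : Nontrivial (Fin n) := Fin.nontrivial_iff_two_le.mpr (by omega)
  have hK : K.Finite := Set.finite_setOf_forall_lt_mem R
  have hn1 : ((n - 1 : ℕ) : ℝ) = (n : ℝ) - 1 := by rw [Nat.cast_sub (by omega), Nat.cast_one]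
  have hn1_pos : (0 : ℝ) < (n : ℝ) - 1 := by
    rw [← hn1]
    exact_mod_cast (by omega : 0 < n - 1)
  have hpow : K.ncard ^ (n - 1) ≤ ∏ p ∈ P, #(R p.1 p.2) := by
    have := card_pow_le_prod_card_of_forall_lt_mem R (A := univ) (S := hK.toFinset)
      (by rw [card_univ, Fintype.card_fin]; omega) (fun _ _ _ _ j hj => absurd (mem_univ j) hj)
      fun t ht i _ j _ => hK.mem_toFinset.mp ht i j
    rwa [card_univ, Fintype.card_fin, univ_product_univ, ← Set.ncard_eq_toFinset_card _ hK] at this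
  have hagm : (K.ncard : ℝ) ≤ (∏ p ∈ P, (#(R p.1 p.2) : ℝ)) ^ ((1 : ℝ) / ((n : ℝ) - 1)) := by
    rw [one_div, Real.le_rpow_inv_iff_of_pos (by positivity)
      (prod_nonneg fun _ _ => Nat.cast_nonneg _) hn1_pos, ← hn1, Real.rpow_natCast]
    exact_mod_cast hpow
  have hcard_P : (#P : ℝ) = n * (n - 1) / 2 := by
    rw [hP, Fintype.card_product_filter_lt, Fintype.card_fin, Nat.cast_choose_two]
  refine ⟨hagm, fun N hN => hagm.trans_eq ?_⟩
  rw [prod_congr rfl fun p hp => by rw [hN p.1 p.2 (mem_filter.mp hp).2], prod_const,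
    ← Real.rpow_natCast, ← Real.rpow_mul (by positivity), hcard_P]
  field_simp
end

section
/- (Shearer's inequality for fractional edge covers.) Let X_1, …, X_n be discrete random variables on a common probability space, each taking finitely many values. For each subset F ⊆ [n] let X_F = (X_i)_{i∈F}, and let X = X_{[n]}. Let H = ([n], E) be a hypergraph and x = (x_F)_{F∈E} any fractional edge cover of H. Then the Shannon entropies satisfy H[X] ≤ ∑_{F∈E} x_F · H[X_F]. -/
open scoped BigOperators

/-- The joint (binary) Shannon entropy `H[X_F]` of the tuple of random variables
`(X i)_{i ∈ F}` on a finite probability space with probability mass function `p`: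
`H[X_F] = - ∑_y Pr[X_F = y] log₂ Pr[X_F = y]`, where `y` ranges over tuples of values.
(The term for `Pr = 0` vanishes since `Real.logb 2 0 = 0`.) -/
noncomputable def jointEntropy {n : ℕ} {Ω : Type*} [Fintype Ω]
    {D : Fin n → Type*} [∀ i, Fintype (D i)] [∀ i, DecidableEq (D i)]
    (p : Ω → ℝ) (X : (i : Fin n) → Ω → D i) (F : Finset (Fin n)) : ℝ :=
  - ∑ y : (i : {i : Fin n // i ∈ F}) → D i.1,
      (∑ ω ∈ Finset.univ.filter (fun ω => ∀ i : {i : Fin n // i ∈ F}, X i.1 ω = y i), p ω) *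
        Real.logb 2
          (∑ ω ∈ Finset.univ.filter (fun ω => ∀ i : {i : Fin n // i ∈ F}, X i.1 ω = y i), p ω)

/-!
Entropy of subtuples, `F ↦ H[X_F]`, is monotone and submodular. Submodularity is Gibbs'
inequality `∑ q log (r / q) ≤ ∑ r - ∑ q` for `q` the law of `X_{A ∪ B}` and
`r(z) = q_A(z_A) q_B(z_B) / q_{A ∩ B}(z_{A ∩ B})`, whose total mass is at most one because for each
value `w` of `X_{A ∩ B}` the compatible pairs `(z_A, z_B)` carry mass at most `q_{A ∩ B}(w)²`.

For any monotone submodular `f` with `f ∅ = 0`, the increments `Δ_j = f [0, j] - f [0, j)` along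
the chain of prefixes of `[n]` are nonnegative and sum to `f [n]`, while submodularity gives
`∑_{j ∈ F} Δ_j ≤ f F`. Hence `f [n] = ∑_j Δ_j ≤ ∑_j ∑_{F ∋ j} x_F Δ_j ≤ ∑_F x_F f F`.
-/

open Finset Real

section Restrict

variable {ι : Type*} [DecidableEq ι] {β : ι → Type*} {A B : Finset ι}

theorem restrict₂_union_injective :
    Function.Injective fun z : (i : ↥(A ∪ B)) → β i =>
      (restrict₂ subset_union_left z, restrict₂ subset_union_right z) := by
  intro z z' h
  funext i
  rcases mem_union.1 i.2 with hiA | hiB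
  · exact congrFun (congrArg Prod.fst h) ⟨i.1, hiA⟩
  · exact congrFun (congrArg Prod.snd h) ⟨i.1, hiB⟩

theorem sum_restrict₂_mul_le [∀ i, Fintype (β i)] [∀ i, DecidableEq (β i)]
    (f : ((i : ↥A) → β i) → ℝ) (g : ((i : ↥B) → β i) → ℝ) (hf : 0 ≤ f) (hg : 0 ≤ g)
    (w : (i : ↥(A ∩ B)) → β i) :
    ∑ z with restrict₂ inter_subset_union z = w,
        f (restrict₂ subset_union_left z) * g (restrict₂ subset_union_right z) ≤
      (∑ a with restrict₂ inter_subset_left a = w, f a) *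
        ∑ b with restrict₂ inter_subset_right b = w, g b := by
  rw [sum_mul_sum, ← sum_product']
  refine (sum_image (f := fun ab => f ab.1 * g ab.2)
    restrict₂_union_injective.injOn).symm.trans_le ?_
  refine sum_le_sum_of_subset_of_nonneg ?_ fun ab _ _ => mul_nonneg (hf _) (hg _)
  rintro _ hab
  obtain ⟨z, hz, rfl⟩ := mem_image.1 hab
  have hzw : restrict₂ inter_subset_union z = w := (mem_filter.1 hz).2
  simp only [mem_product, mem_filter, mem_univ, true_and]
  exact ⟨hzw, hzw⟩

end Restrict

/-- Gibbs' inequality `u log (r / u) ≤ r - u` for `r = a b / c`; in the submodularity argument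
`u = Pr[X_{A ∪ B} = z]` and `a, b, c` are the probabilities of its restrictions to `A, B, A ∩ B`. -/
theorem mul_logb_add_mul_logb_le {u a b c : ℝ} (hu : 0 ≤ u) (hua : u ≤ a) (hub : u ≤ b)
    (huc : u ≤ c) :
    u * logb 2 a + u * logb 2 b ≤ u * logb 2 u + u * logb 2 c + (a * b / c - u) / log 2 := by
  have hlog2 : 0 < log 2 := log_pos one_lt_two
  rcases hu.eq_or_lt with rfl | hu
  · simp only [zero_mul, add_zero, zero_add, sub_zero]
    exact div_nonneg (div_nonneg (mul_nonneg hua hub) huc) hlog2.le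
  have ha : 0 < a := hu.trans_le hua
  have hb : 0 < b := hu.trans_le hub
  have hc : 0 < c := hu.trans_le huc
  have gibbs : u * log (a * b / c / u) ≤ a * b / c - u := by
    have := mul_le_mul_of_nonneg_left
      (log_le_sub_one_of_pos (div_pos (div_pos (mul_pos ha hb) hc) hu)) hu.le
    rwa [mul_sub, mul_div_cancel₀ _ hu.ne', mul_one] at this
  rw [log_div (by positivity) hu.ne', log_div (by positivity) hc.ne',
    log_mul ha.ne' hb.ne'] at gibbs
  have key : u * log a + u * log b ≤ u * log u + u * log c + (a * b / c - u) := by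
    linarith
  simp only [logb]
  calc u * (log a / log 2) + u * (log b / log 2) = (u * log a + u * log b) / log 2 := by ring
    _ ≤ (u * log u + u * log c + (a * b / c - u)) / log 2 := by gcongr
    _ = _ := by ring

section Entropy

variable {n : ℕ} {Ω : Type*} [Fintype Ω] {D : Fin n → Type*} [∀ i, DecidableEq (D i)]
  (p : Ω → ℝ) (X : (i : Fin n) → Ω → D i)

noncomputable def jointPMF (F : Finset (Fin n)) (y : (i : ↥F) → D i) : ℝ :=
  ∑ ω with F.restrict (X · ω) = y, p ω

variable {p} in
theorem jointPMF_nonneg (hp : 0 ≤ p) (F : Finset (Fin n)) (y : (i : ↥F) → D i) :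
    0 ≤ jointPMF p X F y :=
  sum_nonneg fun ω _ => hp ω

variable {p} in
theorem jointPMF_le_restrict₂ (hp : 0 ≤ p) {F G : Finset (Fin n)} (h : G ⊆ F)
    (z : (i : ↥F) → D i) : jointPMF p X F z ≤ jointPMF p X G (restrict₂ h z) := by
  refine sum_le_sum_of_subset_of_nonneg ?_ fun ω _ _ => hp ω
  intro ω hω
  simp only [mem_filter, mem_univ, true_and] at hω ⊢
  rw [← hω]
  rfl

variable [∀ i, Fintype (D i)]

theorem jointEntropy_eq_sum_jointPMF (F : Finset (Fin n)) :
    jointEntropy p X F = -∑ y, jointPMF p X F y * logb 2 (jointPMF p X F y) := by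
  simp only [jointEntropy, jointPMF, restrict, funext_iff]

theorem sum_jointPMF (F : Finset (Fin n)) : ∑ y, jointPMF p X F y = ∑ ω, p ω :=
  sum_fiberwise _ _ _

theorem sum_jointPMF_restrict₂ {F G : Finset (Fin n)} (h : G ⊆ F) (w : (i : ↥G) → D i) :
    ∑ z with restrict₂ h z = w, jointPMF p X F z = jointPMF p X G w := by
  unfold jointPMF
  rw [sum_fiberwise_eq_sum_filter]
  refine sum_congr (filter_congr fun ω _ => ?_) fun _ _ => rfl
  simp only [mem_filter, mem_univ, true_and]
  rfl

theorem jointEntropy_eq_sum_restrict₂ {F G : Finset (Fin n)} (h : G ⊆ F) :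
    jointEntropy p X G = -∑ z, jointPMF p X F z * logb 2 (jointPMF p X G (restrict₂ h z)) := by
  rw [jointEntropy_eq_sum_jointPMF, ← sum_fiberwise univ (restrict₂ h)]
  congr 1
  refine sum_congr rfl fun w _ => ?_
  have hfiber : ∀ z ∈ univ.filter (restrict₂ h · = w),
      jointPMF p X F z * logb 2 (jointPMF p X G (restrict₂ h z)) =
        jointPMF p X F z * logb 2 (jointPMF p X G w) :=
    fun z hz => by rw [(mem_filter.1 hz).2]
  rw [sum_congr rfl hfiber, ← sum_mul, sum_jointPMF_restrict₂]

theorem jointEntropy_empty (hp : ∑ ω, p ω = 1) : jointEntropy p X ∅ = 0 := by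
  have hq : ∀ y, jointPMF p X ∅ y = 1 := fun y => by
    rw [jointPMF, filter_true_of_mem fun ω _ => funext fun i => absurd i.2 (notMem_empty _), hp]
  simp [jointEntropy_eq_sum_jointPMF, hq]

variable {p}

theorem jointEntropy_mono (hp : 0 ≤ p) : Monotone (jointEntropy p X) := by
  intro G F h
  rw [jointEntropy_eq_sum_restrict₂ p X h, jointEntropy_eq_sum_jointPMF, neg_le_neg_iff]
  refine sum_le_sum fun z _ => ?_
  rcases (jointPMF_nonneg X hp F z).eq_or_lt with hz | hz
  · simp [← hz]
  · exact mul_le_mul_of_nonneg_left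
      (logb_le_logb_of_le one_lt_two hz (jointPMF_le_restrict₂ X hp h z)) hz.le

theorem sum_jointPMF_mul_div_le (hp : 0 ≤ p) (A B : Finset (Fin n)) :
    ∑ z, jointPMF p X A (restrict₂ subset_union_left z) *
        jointPMF p X B (restrict₂ subset_union_right z) /
        jointPMF p X (A ∩ B) (restrict₂ inter_subset_union z) ≤ ∑ ω, p ω := by
  rw [← sum_fiberwise univ (restrict₂ inter_subset_union), ← sum_jointPMF p X (A ∩ B)]
  refine sum_le_sum fun w _ => ?_
  have hfiber : ∀ z ∈ univ.filter (restrict₂ inter_subset_union · = w),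
      jointPMF p X A (restrict₂ subset_union_left z) *
          jointPMF p X B (restrict₂ subset_union_right z) /
          jointPMF p X (A ∩ B) (restrict₂ inter_subset_union z) =
        jointPMF p X A (restrict₂ subset_union_left z) *
          jointPMF p X B (restrict₂ subset_union_right z) / jointPMF p X (A ∩ B) w :=
    fun z hz => by rw [(mem_filter.1 hz).2]
  rw [sum_congr rfl hfiber, ← sum_div]
  refine div_le_of_le_mul₀ (jointPMF_nonneg X hp _ _) (jointPMF_nonneg X hp _ _) ?_
  calc _ ≤ (∑ a with restrict₂ inter_subset_left a = w, jointPMF p X A a) *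
        ∑ b with restrict₂ inter_subset_right b = w, jointPMF p X B b :=
        sum_restrict₂_mul_le _ _ (jointPMF_nonneg X hp A) (jointPMF_nonneg X hp B) w
    _ = _ := by rw [sum_jointPMF_restrict₂, sum_jointPMF_restrict₂]

theorem jointEntropy_inter_add_jointEntropy_union_le (hp : 0 ≤ p) (A B : Finset (Fin n)) :
    jointEntropy p X (A ∩ B) + jointEntropy p X (A ∪ B) ≤
      jointEntropy p X A + jointEntropy p X B := by
  rw [jointEntropy_eq_sum_restrict₂ p X (inter_subset_union (s := A) (t := B)),
    jointEntropy_eq_sum_restrict₂ p X (subset_union_left (s₁ := A) (s₂ := B)),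
    jointEntropy_eq_sum_restrict₂ p X (subset_union_right (s₁ := A) (s₂ := B)),
    jointEntropy_eq_sum_jointPMF, ← neg_add, ← neg_add, neg_le_neg_iff]
  have pointwise := sum_le_sum fun (z : (i : ↥(A ∪ B)) → D i) (_ : z ∈ univ) =>
    mul_logb_add_mul_logb_le
      (jointPMF_nonneg X hp _ z) (jointPMF_le_restrict₂ X hp subset_union_left z)
      (jointPMF_le_restrict₂ X hp subset_union_right z)
      (jointPMF_le_restrict₂ X hp inter_subset_union z)
  rw [sum_add_distrib, sum_add_distrib, sum_add_distrib, ← sum_div, sum_sub_distrib,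
    sum_jointPMF] at pointwise
  have gibbs_mass : (∑ z, jointPMF p X A (restrict₂ subset_union_left z) *
      jointPMF p X B (restrict₂ subset_union_right z) /
      jointPMF p X (A ∩ B) (restrict₂ inter_subset_union z) - ∑ ω, p ω) / log 2 ≤ 0 :=
    div_nonpos_of_nonpos_of_nonneg (sub_nonpos.2 (sum_jointPMF_mul_div_le X hp A B))
      (log_nonneg one_le_two)
  linarith

end Entropy

section FractionalCover

variable {n : ℕ}

def initialSegment (n k : ℕ) : Finset (Fin n) := {i | (i : ℕ) < k}

@[simp]
theorem mem_initialSegment {k : ℕ} {i : Fin n} : i ∈ initialSegment n k ↔ (i : ℕ) < k := by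
  simp [initialSegment]

variable (f : Finset (Fin n) → ℝ)

def prefixIncrement (j : Fin n) : ℝ := f (initialSegment n (j + 1)) - f (initialSegment n j)

theorem sum_prefixIncrement (h0 : f ∅ = 0) : ∑ j, prefixIncrement f j = f univ := by
  have hfull : initialSegment n n = univ := by ext i; simp
  have hzero : initialSegment n 0 = ∅ := by ext i; simp
  calc ∑ j, prefixIncrement f j
      = ∑ k ∈ range n, (f (initialSegment n (k + 1)) - f (initialSegment n k)) :=
        Fin.sum_univ_eq_sum_range (fun k => f (initialSegment n (k + 1)) - f (initialSegment n k)) n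
    _ = f univ := by
        rw [sum_range_sub (fun k => f (initialSegment n k)), hfull, hzero, h0, sub_zero]

theorem prefixIncrement_nonneg (hf : Monotone f) (j : Fin n) : 0 ≤ prefixIncrement f j :=
  sub_nonneg.2 (hf fun i hi => by simp only [mem_initialSegment] at hi ⊢; omega)

theorem sum_prefixIncrement_le (h0 : 0 ≤ f ∅)
    (hsub : ∀ A B, f (A ∩ B) + f (A ∪ B) ≤ f A + f B) (F : Finset (Fin n)) :
    ∑ j ∈ F, prefixIncrement f j ≤ f F := by
  induction F using Finset.induction_on_max with
  | empty => simpa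
  | insert a s hlt ih =>
    have hinter : initialSegment n a ∩ insert a s = s := by
      ext i
      grind [mem_initialSegment, Fin.lt_def]
    have hunion : initialSegment n a ∪ insert a s = initialSegment n (a + 1) := by
      ext i
      grind [mem_initialSegment, Fin.lt_def, Fin.ext_iff]
    have := hsub (initialSegment n a) (insert a s)
    rw [hinter, hunion] at this
    rw [sum_insert fun ha => (hlt a ha).false, prefixIncrement]
    linarith

theorem le_sum_mul_of_fractionalCover (hf : Monotone f) (h0 : f ∅ = 0)
    (hsub : ∀ A B, f (A ∩ B) + f (A ∪ B) ≤ f A + f B) (E : Finset (Finset (Fin n)))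
    (x : Finset (Fin n) → ℝ) (hx0 : ∀ F ∈ E, 0 ≤ x F)
    (hxcover : ∀ j : Fin n, 1 ≤ ∑ F ∈ E.filter (fun F => j ∈ F), x F) :
    f univ ≤ ∑ F ∈ E, x F * f F :=
  calc f univ = ∑ j, prefixIncrement f j := (sum_prefixIncrement f h0).symm
    _ ≤ ∑ j, (∑ F ∈ E.filter (fun F => j ∈ F), x F) * prefixIncrement f j :=
      sum_le_sum fun j _ => le_mul_of_one_le_left (prefixIncrement_nonneg f hf j) (hxcover j)
    _ = ∑ F ∈ E, x F * ∑ j ∈ F, prefixIncrement f j := by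
      simp_rw [sum_mul, mul_sum]
      exact sum_comm' fun j F => by simp [and_comm]
    _ ≤ ∑ F ∈ E, x F * f F :=
      sum_le_sum fun F hF =>
        mul_le_mul_of_nonneg_left (sum_prefixIncrement_le f h0.ge hsub F) (hx0 F hF)

end FractionalCover

/-- **Shearer's inequality for fractional edge covers.** If `x = (x_F)_{F ∈ E}` is a
fractional edge cover of the hypergraph `([n], E)`, then
`H[X] ≤ ∑_{F ∈ E} x_F · H[X_F]`. -/
theorem shearer_inequality {n : ℕ} {Ω : Type*} [Fintype Ω]
    {D : Fin n → Type*} [∀ i, Fintype (D i)] [∀ i, DecidableEq (D i)]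
    (p : Ω → ℝ) (hp0 : ∀ ω, 0 ≤ p ω) (hp1 : ∑ ω, p ω = 1)
    (X : (i : Fin n) → Ω → D i)
    (E : Finset (Finset (Fin n)))
    (x : Finset (Fin n) → ℝ)
    (hx0 : ∀ F ∈ E, 0 ≤ x F)
    (hxcover : ∀ j : Fin n, 1 ≤ ∑ F ∈ E.filter (fun F => j ∈ F), x F) :
    jointEntropy p X Finset.univ ≤ ∑ F ∈ E, x F * jointEntropy p X F :=
  le_sum_mul_of_fractionalCover _ (jointEntropy_mono X hp0) (jointEntropy_empty p X hp1)
    (jointEntropy_inter_add_jointEntropy_union_le X hp0) E x hx0 hxcover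
end

section
/- (The hard instance for pairwise join plans on the triangle query.) Let m ≥ 1 and let a_0,…,a_m, b_0,…,b_m, c_0,…,c_m be distinct elements. Define R = ({a_0} × {b_0,…,b_m}) ∪ ({a_0,…,a_m} × {b_0}), S = ({b_0} × {c_0,…,c_m}) ∪ ({b_0,…,b_m} × {c_0}), and T = ({a_0} × {c_0,…,c_m}) ∪ ({a_0,…,a_m} × {c_0}). Then: (i) |R| = |S| = |T| = 2m + 1; (ii) the triangle join Q_△ = {(a,b,c) : (a,b) ∈ R, (b,c) ∈ S, (a,c) ∈ T} has exactly 3m + 1 tuples; and (iii) each of the three pairwise joins R ⋈ S (on B), S ⋈ T (on C), and R ⋈ T (on A) has at least (m+1)² tuples. -/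
/-!
Each of `R`, `S`, `T` is a "cross" `{x} × t ∪ s × {y}`: two arms of sizes `m + 1` through
a common centre, hence of size `2m + 1`. A triple in the triangle join agrees with the centre
in at least two coordinates, so the triangle join is itself a cross `{a₀} × S ∪ A × {(b₀, c₀)}`,
of size `(m + 1) + (2m + 1) - 1`. A pairwise join, by contrast, ignores one of the three
constraints and so contains the product of two long arms, e.g. `A × {b₀} × C ⊆ R ⋈ S`.
-/

open Finset

section Cross

variable {α β : Type*} [DecidableEq α] [DecidableEq β]

def cross (x : α) (y : β) (s : Finset α) (t : Finset β) : Finset (α × β) :=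
  ({x} ×ˢ t) ∪ (s ×ˢ {y})

variable {x : α} {y : β} {s : Finset α} {t : Finset β}

theorem mem_cross {p : α × β} :
    p ∈ cross x y s t ↔ p.1 = x ∧ p.2 ∈ t ∨ p.1 ∈ s ∧ p.2 = y := by
  simp only [cross, mem_union, mem_product, mem_singleton]

theorem mk_mem_cross (hy : y ∈ t) : (x, y) ∈ cross x y s t :=
  mem_cross.2 (Or.inl ⟨rfl, hy⟩)

theorem cross_subset_product (hx : x ∈ s) (hy : y ∈ t) : cross x y s t ⊆ s ×ˢ t := by
  intro p hp
  rw [mem_cross] at hp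
  rcases hp with ⟨h1, h2⟩ | ⟨h1, h2⟩ <;> simp_all [mem_product]

theorem card_cross_add_one (hx : x ∈ s) (hy : y ∈ t) :
    (cross x y s t).card + 1 = s.card + t.card := by
  have hinter : ({x} ×ˢ t) ∩ (s ×ˢ {y}) = {(x, y)} := by
    ext ⟨x', y'⟩
    simp only [mem_inter, mem_product, mem_singleton, Prod.mk.injEq]
    constructor
    · rintro ⟨⟨rfl, -⟩, -, rfl⟩; exact ⟨rfl, rfl⟩
    · rintro ⟨rfl, rfl⟩; exact ⟨⟨rfl, hy⟩, hx, rfl⟩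
  have := card_union_add_card_inter ({x} ×ˢ t) (s ×ˢ {y})
  rw [hinter, card_singleton, card_product, card_product, card_singleton, card_singleton] at this
  rw [cross]; omega

end Cross

theorem Finset.card_le_ncard_of_coe_subset {γ : Type*} {U V : Finset γ} {P : Set γ}
    (hU : ↑U ⊆ P) (hV : P ⊆ ↑V) : U.card ≤ P.ncard :=
  Set.ncard_coe_finset U ▸ Set.ncard_le_ncard hU (V.finite_toSet.subset hV)

section Joins

variable {α β γ : Type*} [DecidableEq α] [DecidableEq β] [DecidableEq γ]
  {x : α} {y : β} {z : γ} {s : Finset α} {t : Finset β} {u : Finset γ}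

theorem triangle_join_cross (hx : x ∈ s) (hy : y ∈ t) (hz : z ∈ u) :
    {p : α × β × γ | (p.1, p.2.1) ∈ cross x y s t ∧ (p.2.1, p.2.2) ∈ cross y z t u ∧
      (p.1, p.2.2) ∈ cross x z s u} = ↑(cross x (y, z) s (cross y z t u)) := by
  ext ⟨x', y', z'⟩
  simp only [Set.mem_ofPred_eq, mem_coe, mem_cross]
  aesop

theorem card_mul_card_le_ncard_join_on_b (hx : x ∈ s) (hy : y ∈ t) (hz : z ∈ u) :
    s.card * u.card ≤
      {p : α × β × γ | (p.1, p.2.1) ∈ cross x y s t ∧ (p.2.1, p.2.2) ∈ cross y z t u}.ncard := by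
  calc s.card * u.card = (s ×ˢ {y} ×ˢ u).card := by simp
    _ ≤ _ := card_le_ncard_of_coe_subset (V := s ×ˢ t ×ˢ u) ?_ ?_
  · rintro ⟨x', y', z'⟩
    simp +contextual [mem_cross]
  · rintro ⟨x', y', z'⟩ ⟨hR, hS⟩
    have := cross_subset_product hx hy hR
    have := cross_subset_product hy hz hS
    simp_all

theorem card_mul_card_le_ncard_join_on_c (hx : x ∈ s) (hy : y ∈ t) (hz : z ∈ u) :
    s.card * t.card ≤
      {p : α × β × γ | (p.2.1, p.2.2) ∈ cross y z t u ∧ (p.1, p.2.2) ∈ cross x z s u}.ncard := by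
  calc s.card * t.card = (s ×ˢ t ×ˢ {z}).card := by simp
    _ ≤ _ := card_le_ncard_of_coe_subset (V := s ×ˢ t ×ˢ u) ?_ ?_
  · rintro ⟨x', y', z'⟩
    simp +contextual [mem_cross]
  · rintro ⟨x', y', z'⟩ ⟨hS, hT⟩
    have := cross_subset_product hy hz hS
    have := cross_subset_product hx hz hT
    simp_all

theorem card_mul_card_le_ncard_join_on_a (hx : x ∈ s) (hy : y ∈ t) (hz : z ∈ u) :
    t.card * u.card ≤
      {p : α × β × γ | (p.1, p.2.1) ∈ cross x y s t ∧ (p.1, p.2.2) ∈ cross x z s u}.ncard := by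
  calc t.card * u.card = ({x} ×ˢ t ×ˢ u).card := by simp
    _ ≤ _ := card_le_ncard_of_coe_subset (V := s ×ˢ t ×ˢ u) ?_ ?_
  · rintro ⟨x', y', z'⟩
    simp +contextual [mem_cross]
  · rintro ⟨x', y', z'⟩ ⟨hR, hT⟩
    have := cross_subset_product hx hy hR
    have := cross_subset_product hx hz hT
    simp_all

end Joins

theorem triangle_hard_instance_general {A B C : Type*}
    [DecidableEq A] [DecidableEq B] [DecidableEq C]
    (m : ℕ)
    (a : Fin (m + 1) → A) (b : Fin (m + 1) → B) (c : Fin (m + 1) → C)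
    (ha : Function.Injective a) (hb : Function.Injective b) (hc : Function.Injective c)
    (R : Finset (A × B)) (S : Finset (B × C)) (T : Finset (A × C))
    (hR : R = ({a 0} ×ˢ Finset.univ.image b) ∪ (Finset.univ.image a ×ˢ {b 0}))
    (hS : S = ({b 0} ×ˢ Finset.univ.image c) ∪ (Finset.univ.image b ×ˢ {c 0}))
    (hT : T = ({a 0} ×ˢ Finset.univ.image c) ∪ (Finset.univ.image a ×ˢ {c 0})) :
    R.card = 2 * m + 1 ∧ S.card = 2 * m + 1 ∧ T.card = 2 * m + 1 ∧
    ({p : A × B × C | (p.1, p.2.1) ∈ R ∧ (p.2.1, p.2.2) ∈ S ∧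
        (p.1, p.2.2) ∈ T}).ncard = 3 * m + 1 ∧
    (m + 1) ^ 2 ≤ ({p : A × B × C | (p.1, p.2.1) ∈ R ∧ (p.2.1, p.2.2) ∈ S}).ncard ∧
    (m + 1) ^ 2 ≤ ({p : A × B × C | (p.2.1, p.2.2) ∈ S ∧ (p.1, p.2.2) ∈ T}).ncard ∧
    (m + 1) ^ 2 ≤ ({p : A × B × C | (p.1, p.2.1) ∈ R ∧ (p.1, p.2.2) ∈ T}).ncard := by
  set A' := univ.image a
  set B' := univ.image b
  set C' := univ.image c
  have hA : A'.card = m + 1 := by simp [A', card_image_of_injective _ ha]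
  have hB : B'.card = m + 1 := by simp [B', card_image_of_injective _ hb]
  have hC : C'.card = m + 1 := by simp [C', card_image_of_injective _ hc]
  have ha0 : a 0 ∈ A' := mem_image_of_mem a (mem_univ 0)
  have hb0 : b 0 ∈ B' := mem_image_of_mem b (mem_univ 0)
  have hc0 : c 0 ∈ C' := mem_image_of_mem c (mem_univ 0)
  obtain rfl : R = cross (a 0) (b 0) A' B' := hR
  obtain rfl : S = cross (b 0) (c 0) B' C' := hS
  obtain rfl : T = cross (a 0) (c 0) A' C' := hT
  have hR := card_cross_add_one ha0 hb0
  have hS := card_cross_add_one hb0 hc0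
  have hT := card_cross_add_one ha0 hc0
  refine ⟨by omega, by omega, by omega, ?_, ?_, ?_, ?_⟩
  · rw [triangle_join_cross ha0 hb0 hc0, Set.ncard_coe_finset]
    have := card_cross_add_one ha0 (mk_mem_cross (x := b 0) (s := B') hc0)
    omega
  · simpa [hA, hC, sq] using card_mul_card_le_ncard_join_on_b ha0 hb0 hc0
  · simpa [hA, hB, sq] using card_mul_card_le_ncard_join_on_c ha0 hb0 hc0
  · simpa [hB, hC, sq] using card_mul_card_le_ncard_join_on_a ha0 hb0 hc0

/-- **The hard instance for pairwise join plans on the triangle query.**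
With `R = ({a₀} × {b₀,…,b_m}) ∪ ({a₀,…,a_m} × {b₀})` and similarly `S`, `T`:
(i) `|R| = |S| = |T| = 2m + 1`; (ii) the triangle join has exactly `3m + 1` tuples;
(iii) each pairwise join `R ⋈ S`, `S ⋈ T`, `R ⋈ T` has at least `(m+1)²` tuples. -/
theorem triangle_hard_instance {A B C : Type*}
    [DecidableEq A] [DecidableEq B] [DecidableEq C]
    (m : ℕ) (hm : 1 ≤ m)
    (a : Fin (m + 1) → A) (b : Fin (m + 1) → B) (c : Fin (m + 1) → C)
    (ha : Function.Injective a) (hb : Function.Injective b) (hc : Function.Injective c)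
    (R : Finset (A × B)) (S : Finset (B × C)) (T : Finset (A × C))
    (hR : R = ({a 0} ×ˢ Finset.univ.image b) ∪ (Finset.univ.image a ×ˢ {b 0}))
    (hS : S = ({b 0} ×ˢ Finset.univ.image c) ∪ (Finset.univ.image b ×ˢ {c 0}))
    (hT : T = ({a 0} ×ˢ Finset.univ.image c) ∪ (Finset.univ.image a ×ˢ {c 0})) :
    R.card = 2 * m + 1 ∧ S.card = 2 * m + 1 ∧ T.card = 2 * m + 1 ∧
    ({p : A × B × C | (p.1, p.2.1) ∈ R ∧ (p.2.1, p.2.2) ∈ S ∧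
        (p.1, p.2.2) ∈ T}).ncard = 3 * m + 1 ∧
    (m + 1) ^ 2 ≤ ({p : A × B × C | (p.1, p.2.1) ∈ R ∧ (p.2.1, p.2.2) ∈ S}).ncard ∧
    (m + 1) ^ 2 ≤ ({p : A × B × C | (p.2.1, p.2.2) ∈ S ∧ (p.1, p.2.2) ∈ T}).ncard ∧
    (m + 1) ^ 2 ≤ ({p : A × B × C | (p.1, p.2.1) ∈ R ∧ (p.1, p.2.2) ∈ T}).ncard :=
  triangle_hard_instance_general m a b c ha hb hc R S T hR hS hT
end

section
/- (AGM bound for projected joins.) Let H = (V, E) be a hypergraph with finite relations R_F for F ∈ E, and let x = (x_F)_{F∈E} be any fractional edge cover of H. For any subset B ⊆ V, the join of the projected relations P = ⋈_{F∈E} π_{F∩B}(R_F), consisting of all tuples t : B → D whose restriction to F ∩ B belongs to π_{F∩B}(R_F) for every F ∈ E, satisfies |P| ≤ ∏_{F∈E} |R_F|^{x_F}. -/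
/-!
Induction on `B`, adding one vertex `a` at a time. Tuples over `insert a B` are counted by
their value `d` at `a`: those with `t a = d` restrict injectively into the join over `B` of the
relations `σ_{a = d}(R_F)`, so the induction hypothesis bounds their number by
`∏_F |σ_{a = d}(R_F)| ^ x_F`. Summing over `d`, the factors of the edges avoiding `a` do not
depend on `d`, while for the edges through `a` the sets `σ_{a = d}(R_F)` partition `R_F` and
their weights add up to at least `1`; Hölder's inequality then gives `∏_F |R_F| ^ x_F`.
-/

open Finset

namespace Real

theorem sum_prod_rpow_le_prod_sum_rpow_of_sum_eq_one {ι κ : Type*} (T : Finset ι) (S : Finset κ)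
    (w : ι → ℝ) (g : ι → κ → ℝ) (hw : ∀ i ∈ T, 0 ≤ w i) (hg : ∀ i ∈ T, ∀ d ∈ S, 0 ≤ g i d)
    (hsum : ∑ i ∈ T, w i = 1) :
    ∑ d ∈ S, ∏ i ∈ T, g i d ^ w i ≤ ∏ i ∈ T, (∑ d ∈ S, g i d) ^ w i := by
  set A : ι → ℝ := fun i => ∑ d ∈ S, g i d
  have hA : ∀ i ∈ T, 0 ≤ A i := fun i hi => sum_nonneg (hg i hi)
  set P := ∏ i ∈ T, A i ^ w i
  -- Normalise each `g i` by its total mass `A i`; when `A i = 0`, `g i` vanishes on `S`,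
  -- so the junk value `g i d / 0 = 0` does no harm.
  have hfactor : ∀ d ∈ S, ∏ i ∈ T, g i d ^ w i = (∏ i ∈ T, (g i d / A i) ^ w i) * P := by
    intro d hd
    rw [← prod_mul_distrib]
    refine prod_congr rfl fun i hi => ?_
    have hgA : A i = 0 → g i d = 0 := fun h0 =>
      (sum_eq_zero_iff_of_nonneg (hg i hi)).1 h0 d hd
    rw [← mul_rpow (div_nonneg (hg i hi d hd) (hA i hi)) (hA i hi),
      div_mul_cancel_of_imp hgA]
  have hamgm : ∀ d ∈ S, ∏ i ∈ T, (g i d / A i) ^ w i ≤ ∑ i ∈ T, w i * (g i d / A i) :=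
    fun d hd => geom_mean_le_arith_mean_weighted T w _ hw hsum
      fun i hi => div_nonneg (hg i hi d hd) (hA i hi)
  have hmass : ∑ d ∈ S, ∑ i ∈ T, w i * (g i d / A i) ≤ 1 := by
    rw [sum_comm, ← hsum]
    refine sum_le_sum fun i hi => ?_
    rw [← mul_sum, ← sum_div]
    exact mul_le_of_le_one_right (hw i hi) (div_self_le_one _)
  have hP : 0 ≤ P := prod_nonneg fun i hi => rpow_nonneg (hA i hi) _
  calc ∑ d ∈ S, ∏ i ∈ T, g i d ^ w i
      = (∑ d ∈ S, ∏ i ∈ T, (g i d / A i) ^ w i) * P := by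
        rw [sum_mul]; exact sum_congr rfl hfactor
    _ ≤ (∑ d ∈ S, ∑ i ∈ T, w i * (g i d / A i)) * P :=
        mul_le_mul_of_nonneg_right (sum_le_sum hamgm) hP
    _ ≤ P := mul_le_of_le_one_left hP hmass

theorem sum_prod_rpow_le_prod_sum_rpow_s13 {ι κ : Type*} (T : Finset ι) (S : Finset κ)
    (w : ι → ℝ) (g : ι → κ → ℝ) (hw : ∀ i ∈ T, 0 ≤ w i) (hg : ∀ i ∈ T, ∀ d ∈ S, 0 ≤ g i d)
    (hsum : 1 ≤ ∑ i ∈ T, w i) :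
    ∑ d ∈ S, ∏ i ∈ T, g i d ^ w i ≤ ∏ i ∈ T, (∑ d ∈ S, g i d) ^ w i := by
  set A : ι → ℝ := fun i => ∑ d ∈ S, g i d
  have hA : ∀ i ∈ T, 0 ≤ A i := fun i hi => sum_nonneg (hg i hi)
  set c := ∑ i ∈ T, w i
  have hc : 0 < c := one_pos.trans_le hsum
  -- Move the excess weight `w i - w i / c` onto the bound `g i d ≤ A i`.
  have hw' : ∀ i ∈ T, 0 ≤ w i / c := fun i hi => div_nonneg (hw i hi) hc.le
  have hexcess : ∀ i ∈ T, 0 ≤ w i - w i / c := fun i hi =>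
    sub_nonneg.2 (div_le_self (hw i hi) hsum)
  have hsplit : ∀ d ∈ S, ∏ i ∈ T, g i d ^ w i
      ≤ (∏ i ∈ T, g i d ^ (w i / c)) * ∏ i ∈ T, A i ^ (w i - w i / c) := by
    intro d hd
    rw [← prod_mul_distrib]
    refine prod_le_prod (fun i hi => rpow_nonneg (hg i hi d hd) _) fun i hi => ?_
    calc g i d ^ w i = g i d ^ (w i / c) * g i d ^ (w i - w i / c) := by
          rw [← rpow_add_of_nonneg (hg i hi d hd) (hw' i hi) (hexcess i hi), add_sub_cancel]
      _ ≤ g i d ^ (w i / c) * A i ^ (w i - w i / c) :=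
          mul_le_mul_of_nonneg_left
            (rpow_le_rpow (hg i hi d hd) (single_le_sum (hg i hi) hd) (hexcess i hi))
            (rpow_nonneg (hg i hi d hd) _)
  have hholder := sum_prod_rpow_le_prod_sum_rpow_of_sum_eq_one T S (fun i => w i / c) g hw' hg
    (by rw [← sum_div, div_self hc.ne'])
  calc ∑ d ∈ S, ∏ i ∈ T, g i d ^ w i
      ≤ (∑ d ∈ S, ∏ i ∈ T, g i d ^ (w i / c)) * ∏ i ∈ T, A i ^ (w i - w i / c) := by
        rw [sum_mul]; exact sum_le_sum hsplit
    _ ≤ (∏ i ∈ T, A i ^ (w i / c)) * ∏ i ∈ T, A i ^ (w i - w i / c) :=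
        mul_le_mul_of_nonneg_right hholder (prod_nonneg fun i hi => rpow_nonneg (hA i hi) _)
    _ = ∏ i ∈ T, A i ^ w i := by
        rw [← prod_mul_distrib]
        refine prod_congr rfl fun i hi => ?_
        rw [← rpow_add_of_nonneg (hA i hi) (hw' i hi) (hexcess i hi), add_sub_cancel]

end Real

namespace Hypergraph

variable {V D : Type*}

def projJoin (E : Finset (Finset V)) (R : (F : Finset V) → Set ({v // v ∈ F} → D))
    (B : Finset V) : Set ({v // v ∈ B} → D) :=
  {t | ∀ F ∈ E, ∃ u ∈ R F, ∀ (v : V) (hvF : v ∈ F) (hvB : v ∈ B), u ⟨v, hvF⟩ = t ⟨v, hvB⟩}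

/-- The selection `σ_{a = d}`, applied to every relation. -/
def select (R : (F : Finset V) → Set ({v // v ∈ F} → D)) (a : V) (d : D) (F : Finset V) :
    Set ({v // v ∈ F} → D) :=
  {u ∈ R F | ∀ h : a ∈ F, u ⟨a, h⟩ = d}

variable {E : Finset (Finset V)} {R : (F : Finset V) → Set ({v // v ∈ F} → D)}

theorem select_subset (a : V) (d : D) (F : Finset V) : select R a d F ⊆ R F :=
  fun _ hu => hu.1

theorem select_of_notMem {a : V} {F : Finset V} (d : D) (ha : a ∉ F) : select R a d F = R F :=
  Set.ext fun _ => ⟨And.left, fun hu => ⟨hu, fun h => absurd h ha⟩⟩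

theorem sum_ncard_select_le {a : V} {F : Finset V} (hR : (R F).Finite) (ha : a ∈ F)
    (S : Finset D) : ∑ d ∈ S, (select R a d F).ncard ≤ (R F).ncard := by
  classical
  have hfiber : ∀ d, select R a d F = ↑{u ∈ hR.toFinset | u ⟨a, ha⟩ = d} := fun d => by
    ext u
    simp [select, ha]
  simp only [hfiber, Set.ncard_coe_finset, Set.ncard_eq_toFinset_card _ hR]
  exact (sum_card_fiberwise_eq_card_filter _ _ _).trans_le (card_filter_le _ _)

theorem projJoin_finite {B : Finset V} (hR : ∀ F ∈ E, (R F).Finite)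
    (hcov : ∀ v ∈ B, ∃ F ∈ E, v ∈ F) : (projJoin E R B).Finite := by
  choose F hFE hvF using hcov
  refine (Set.Finite.pi (t := fun v : {v // v ∈ B} => (· ⟨v, hvF v v.2⟩) '' R (F v v.2))
    fun v => (hR _ (hFE v v.2)).image _).subset fun t ht v _ => ?_
  obtain ⟨u, hu, hut⟩ := ht (F v v.2) (hFE v v.2)
  exact ⟨u, hu, hut v _ v.2⟩

variable (x : Finset V → ℝ)

theorem ncard_projJoin_empty_le (hR : ∀ F ∈ E, (R F).Finite) (hx0 : ∀ F ∈ E, 0 ≤ x F) :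
    ((projJoin E R ∅).ncard : ℝ) ≤ ∏ F ∈ E, ((R F).ncard : ℝ) ^ x F := by
  rcases (projJoin E R ∅).eq_empty_or_nonempty with h | ⟨t, ht⟩
  · rw [h, Set.ncard_empty, Nat.cast_zero]
    exact prod_nonneg fun F _ => Real.rpow_nonneg (Nat.cast_nonneg _) _
  · have hone : ∀ F ∈ E, (1 : ℝ) ≤ ((R F).ncard : ℝ) ^ x F := fun F hF => by
      obtain ⟨u, hu, -⟩ := ht F hF
      exact Real.one_le_rpow (mod_cast (Set.ncard_pos (hR F hF)).2 ⟨u, hu⟩) (hx0 F hF)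
    calc ((projJoin E R ∅).ncard : ℝ) ≤ 1 := mod_cast Set.ncard_le_one_of_subsingleton _
      _ ≤ ∏ F ∈ E, ((R F).ncard : ℝ) ^ x F := one_le_prod hone

variable [DecidableEq V]

theorem restrict₂_mem_projJoin_select {a : V} {B : Finset V} {t : {v // v ∈ insert a B} → D}
    (ht : t ∈ projJoin E R (insert a B)) :
    restrict₂ (π := fun _ => D) (subset_insert a B) t ∈
      projJoin E (select R a (t ⟨a, mem_insert_self a B⟩)) B :=
  fun F hF => by
    obtain ⟨u, hu, hut⟩ := ht F hF
    exact ⟨u, ⟨hu, fun h => hut a h _⟩, fun v hvF hvB => hut v hvF _⟩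

theorem ncard_projJoin_insert_le {a : V} {B : Finset V} (hR : ∀ F ∈ E, (R F).Finite)
    (hcov : ∀ v ∈ insert a B, ∃ F ∈ E, v ∈ F) (S : Finset D)
    (hS : ∀ t ∈ projJoin E R (insert a B), t ⟨a, mem_insert_self a B⟩ ∈ S) :
    (projJoin E R (insert a B)).ncard ≤ ∑ d ∈ S, (projJoin E (select R a d) B).ncard := by
  classical
  have hfin := projJoin_finite hR hcov
  rw [Set.ncard_eq_toFinset_card _ hfin,
    card_eq_sum_card_fiberwise fun t ht => hS t (hfin.mem_toFinset.1 ht)]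
  refine sum_le_sum fun d _ => ?_
  rw [← Set.ncard_coe_finset]
  refine Set.ncard_le_ncard_of_injOn (restrict₂ (π := fun _ => D) (subset_insert a B))
    (fun t ht => ?_) ?_
    (projJoin_finite (fun F hF => (hR F hF).subset (select_subset a d F))
      fun v hv => hcov v (mem_insert_of_mem hv))
  · obtain ⟨htJ, rfl⟩ := mem_filter.1 ht
    exact restrict₂_mem_projJoin_select (hfin.mem_toFinset.1 htJ)
  · intro t₁ h₁ t₂ h₂ heq
    obtain ⟨-, h₁a⟩ := mem_filter.1 h₁
    obtain ⟨-, h₂a⟩ := mem_filter.1 h₂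
    funext v
    rcases mem_insert.1 v.2 with hva | hvB
    · rw [show v = ⟨a, mem_insert_self a B⟩ from Subtype.ext hva, h₁a, h₂a]
    · exact congrFun heq ⟨v, hvB⟩

theorem sum_prod_ncard_select_rpow_le (hR : ∀ F ∈ E, (R F).Finite) (hx0 : ∀ F ∈ E, 0 ≤ x F)
    {a : V} (ha : 1 ≤ ∑ F ∈ E.filter (a ∈ ·), x F) (S : Finset D) :
    ∑ d ∈ S, ∏ F ∈ E, ((select R a d F).ncard : ℝ) ^ x F ≤ ∏ F ∈ E, ((R F).ncard : ℝ) ^ x F := by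
  set Q := ∏ F ∈ E.filter (a ∉ ·), ((R F).ncard : ℝ) ^ x F
  have hQ : 0 ≤ Q := prod_nonneg fun F _ => Real.rpow_nonneg (Nat.cast_nonneg _) _
  calc ∑ d ∈ S, ∏ F ∈ E, ((select R a d F).ncard : ℝ) ^ x F
      = (∑ d ∈ S, ∏ F ∈ E.filter (a ∈ ·), ((select R a d F).ncard : ℝ) ^ x F) * Q := by
        rw [sum_mul]
        refine sum_congr rfl fun d _ => ?_
        rw [← prod_filter_mul_prod_filter_not E (a ∈ ·)]
        congr 1
        exact prod_congr rfl fun F hF => by rw [select_of_notMem d (mem_filter.1 hF).2]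
    _ ≤ (∏ F ∈ E.filter (a ∈ ·), (∑ d ∈ S, ((select R a d F).ncard : ℝ)) ^ x F) * Q :=
        mul_le_mul_of_nonneg_right (Real.sum_prod_rpow_le_prod_sum_rpow_s13 _ _ _ _
          (fun F hF => hx0 F (mem_filter.1 hF).1) (fun _ _ _ _ => Nat.cast_nonneg _) ha) hQ
    _ ≤ (∏ F ∈ E.filter (a ∈ ·), ((R F).ncard : ℝ) ^ x F) * Q := by
        refine mul_le_mul_of_nonneg_right (prod_le_prod (fun F _ => Real.rpow_nonneg
          (sum_nonneg fun _ _ => Nat.cast_nonneg _) _) fun F hF => ?_) hQ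
        obtain ⟨hFE, haF⟩ := mem_filter.1 hF
        exact Real.rpow_le_rpow (sum_nonneg fun _ _ => Nat.cast_nonneg _)
          (mod_cast sum_ncard_select_le (hR F hFE) haF S) (hx0 F hFE)
    _ = ∏ F ∈ E, ((R F).ncard : ℝ) ^ x F := prod_filter_mul_prod_filter_not _ _ _

theorem ncard_projJoin_le (hR : ∀ F ∈ E, (R F).Finite) (hx0 : ∀ F ∈ E, 0 ≤ x F) (B : Finset V)
    (hxcover : ∀ v ∈ B, 1 ≤ ∑ F ∈ E.filter (v ∈ ·), x F) :
    ((projJoin E R B).ncard : ℝ) ≤ ∏ F ∈ E, ((R F).ncard : ℝ) ^ x F := by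
  classical
  induction B using Finset.induction_on generalizing R with
  | empty => exact ncard_projJoin_empty_le x hR hx0
  | @insert a B _ ih =>
    have hcov : ∀ v ∈ insert a B, ∃ F ∈ E, v ∈ F := fun v hv => by
      obtain ⟨F, hF⟩ := nonempty_of_sum_ne_zero (one_pos.trans_le (hxcover v hv)).ne'
      exact ⟨F, (mem_filter.1 hF).1, (mem_filter.1 hF).2⟩
    have hfin := projJoin_finite hR hcov
    have hR' : ∀ d, ∀ F ∈ E, (select R a d F).Finite := fun d F hF =>
      (hR F hF).subset (select_subset a d F)
    set S := hfin.toFinset.image (fun t => t ⟨a, mem_insert_self a B⟩)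
    calc ((projJoin E R (insert a B)).ncard : ℝ)
        ≤ ∑ d ∈ S, ((projJoin E (select R a d) B).ncard : ℝ) :=
          mod_cast ncard_projJoin_insert_le hR hcov S fun t ht =>
            mem_image_of_mem _ (hfin.mem_toFinset.2 ht)
      _ ≤ ∑ d ∈ S, ∏ F ∈ E, ((select R a d F).ncard : ℝ) ^ x F :=
          sum_le_sum fun d _ => ih (hR' d) fun v hv => hxcover v (mem_insert_of_mem hv)
      _ ≤ ∏ F ∈ E, ((R F).ncard : ℝ) ^ x F :=
          sum_prod_ncard_select_rpow_le x hR hx0 (hxcover a (mem_insert_self a B)) S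

end Hypergraph

theorem agm_projected_join_general {V D : Type*} [DecidableEq V]
    (E : Finset (Finset V))
    (R : (F : Finset V) → Set ({v : V // v ∈ F} → D))
    (hR : ∀ F ∈ E, (R F).Finite)
    (x : Finset V → ℝ)
    (hx0 : ∀ F ∈ E, 0 ≤ x F)
    (hxcover : ∀ v : V, 1 ≤ ∑ F ∈ E.filter (fun F => v ∈ F), x F)
    (B : Finset V) :
    (({t : {v : V // v ∈ B} → D | ∀ F ∈ E, ∃ u ∈ R F,
        ∀ (v : V) (hvF : v ∈ F) (hvB : v ∈ B), u ⟨v, hvF⟩ = t ⟨v, hvB⟩}).ncard : ℝ)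
      ≤ ∏ F ∈ E, ((R F).ncard : ℝ) ^ (x F) :=
  Hypergraph.ncard_projJoin_le x hR hx0 B fun v _ => hxcover v

/-- **AGM bound for projected joins.** Let `H = (V, E)` be a hypergraph with finite
relations `R_F` and `x` a fractional edge cover of `H`.  For any `B ⊆ V`, the join of
the projected relations `P = ⋈_{F ∈ E} π_{F ∩ B}(R_F)` satisfies
`|P| ≤ ∏_{F ∈ E} |R_F| ^ (x_F)`. -/
theorem agm_projected_join {V D : Type*} [Fintype V] [DecidableEq V]
    (E : Finset (Finset V))
    (R : (F : Finset V) → Set ({v : V // v ∈ F} → D))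
    (hR : ∀ F ∈ E, (R F).Finite)
    (x : Finset V → ℝ)
    (hx0 : ∀ F ∈ E, 0 ≤ x F)
    (hxcover : ∀ v : V, 1 ≤ ∑ F ∈ E.filter (fun F => v ∈ F), x F)
    (B : Finset V) :
    (({t : {v : V // v ∈ B} → D | ∀ F ∈ E, ∃ u ∈ R F,
        ∀ (v : V) (hvF : v ∈ F) (hvB : v ∈ B), u ⟨v, hvF⟩ = t ⟨v, hvB⟩}).ncard : ℝ)
      ≤ ∏ F ∈ E, ((R F).ncard : ℝ) ^ (x F) :=
  agm_projected_join_general E R hR x hx0 hxcover B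
end

section
/- (Triangle count in a graph.) Let G be a finite simple (undirected, loopless) graph with M edges. Then the number of triangles in G (unordered sets of three pairwise adjacent vertices) is at most (2M)^{3/2} / 6. -/
/-!
A triangle contains six ordered edges, and the triangles through an ordered edge `(a, b)` are
the sets `{a, b, c}` with `c` a common neighbour, so `6 T ≤ ∑_{(a, b)} codeg(a, b)` over the
`2M` ordered edges. Since `codeg(a, b)² ≤ deg a · deg b`, Cauchy–Schwarz gives
`(6 T)² ≤ 2M · ∑_{(a, b)} deg a · deg b ≤ 2M · (∑_v deg v)² = (2M)³`.
-/

open Finset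

namespace SimpleGraph

variable {V : Type*}

lemma IsNClique.exists_commonNeighbor_eq_triple [DecidableEq V] {G : SimpleGraph V}
    {s : Finset V} (hs : G.IsNClique 3 s) {a b : V} (ha : a ∈ s) (hb : b ∈ s) (hab : a ≠ b) :
    ∃ c ∈ G.commonNeighbors a b, s = {a, b, c} := by
  have hsub : {a, b} ⊆ s := by simp [insert_subset_iff, ha, hb]
  obtain ⟨c, hc⟩ : ∃ c, s \ {a, b} = {c} := by
    rw [← card_eq_one, card_sdiff_of_subset hsub, hs.card_eq, card_pair hab]
  have hcs : c ∈ s ∧ c ≠ a ∧ c ≠ b := by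
    have : c ∈ s \ {a, b} := hc ▸ mem_singleton_self c
    simpa [not_or] using this
  refine ⟨c, ⟨hs.isClique ha hcs.1 hcs.2.1.symm, hs.isClique hb hcs.1 hcs.2.2.symm⟩, ?_⟩
  rw [← sdiff_union_of_subset hsub, hc]
  ext x
  simp only [mem_union, mem_insert, mem_singleton]
  tauto

variable [Fintype V] (G : SimpleGraph V) [DecidableRel G.Adj]

lemma sq_card_commonNeighbors_le_degree_mul_degree (a b : V) :
    Fintype.card (G.commonNeighbors a b) ^ 2 ≤ G.degree a * G.degree b := by
  rw [sq]
  exact Nat.mul_le_mul (G.card_commonNeighbors_le_degree_left a b)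
    (G.card_commonNeighbors_le_degree_right a b)

def adjPairs : Finset (V × V) := {p | G.Adj p.1 p.2}

lemma card_adjPairs : #G.adjPairs = 2 * #G.edgeFinset := by
  rw [← dart_card_eq_twice_card_edges, ← card_univ,
    ← card_map ⟨Dart.toProd, Dart.toProd_injective⟩]
  congr 1
  ext p
  simp only [adjPairs, mem_filter, mem_univ, true_and, mem_map, Function.Embedding.coeFn_mk]
  exact ⟨fun h => ⟨⟨p, h⟩, rfl⟩, by rintro ⟨d, -, rfl⟩; exact d.adj⟩

lemma sum_adjPairs_degree_mul_degree_le :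
    ∑ p ∈ G.adjPairs, G.degree p.1 * G.degree p.2 ≤ (2 * #G.edgeFinset) ^ 2 :=
  calc ∑ p ∈ G.adjPairs, G.degree p.1 * G.degree p.2
      ≤ ∑ p : V × V, G.degree p.1 * G.degree p.2 := sum_le_sum_of_subset (subset_univ _)
    _ = (2 * #G.edgeFinset) ^ 2 := by
      rw [sq, ← sum_degrees_eq_twice_card_edges, Fintype.sum_mul_sum]
      exact Fintype.sum_prod_type _

variable [DecidableEq V]

lemma card_filter_mem_offDiag_cliqueFinset_three_le (a b : V) :
    #{s ∈ G.cliqueFinset 3 | (a, b) ∈ s.offDiag} ≤ Fintype.card (G.commonNeighbors a b) := by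
  rw [← Set.toFinset_card]
  refine (card_le_card fun s hs => ?_).trans (card_image_le (f := fun c => {a, b, c}))
  simp only [mem_filter, mem_cliqueFinset_iff, mem_offDiag] at hs
  obtain ⟨c, hc, rfl⟩ := hs.1.exists_commonNeighbor_eq_triple hs.2.1 hs.2.2.1 hs.2.2.2
  exact mem_image_of_mem _ (Set.mem_toFinset.2 hc)

lemma six_mul_card_cliqueFinset_three_le :
    6 * #(G.cliqueFinset 3) ≤ ∑ p ∈ G.adjPairs, Fintype.card (G.commonNeighbors p.1 p.2) := by
  let r : Finset V → V × V → Prop := fun s p => p ∈ s.offDiag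
  calc 6 * #(G.cliqueFinset 3)
      = ∑ s ∈ G.cliqueFinset 3, #(G.adjPairs.bipartiteAbove r s) := by
        rw [mul_comm, ← smul_eq_mul, ← sum_const]
        refine sum_congr rfl fun s hs => ?_
        rw [mem_cliqueFinset_iff] at hs
        have : s.offDiag ⊆ G.adjPairs := fun p hp => by
          rw [mem_offDiag] at hp
          simpa [adjPairs] using hs.isClique hp.1 hp.2.1 hp.2.2
        rw [bipartiteAbove, filter_mem_eq_inter, inter_eq_right.2 this, offDiag_card, hs.card_eq]
    _ = ∑ p ∈ G.adjPairs, #((G.cliqueFinset 3).bipartiteBelow r p) :=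
        sum_card_bipartiteAbove_eq_sum_card_bipartiteBelow _
    _ ≤ ∑ p ∈ G.adjPairs, Fintype.card (G.commonNeighbors p.1 p.2) :=
        sum_le_sum fun p _ => G.card_filter_mem_offDiag_cliqueFinset_three_le p.1 p.2

theorem sq_six_mul_card_cliqueFinset_three_le :
    (6 * #(G.cliqueFinset 3)) ^ 2 ≤ (2 * #G.edgeFinset) ^ 3 :=
  calc (6 * #(G.cliqueFinset 3)) ^ 2
      ≤ (∑ p ∈ G.adjPairs, Fintype.card (G.commonNeighbors p.1 p.2)) ^ 2 := by
        gcongr; exact G.six_mul_card_cliqueFinset_three_le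
    _ ≤ #G.adjPairs * ∑ p ∈ G.adjPairs, Fintype.card (G.commonNeighbors p.1 p.2) ^ 2 :=
        sq_sum_le_card_mul_sum_sq
    _ ≤ #G.adjPairs * ∑ p ∈ G.adjPairs, G.degree p.1 * G.degree p.2 := by
        gcongr with p; exact G.sq_card_commonNeighbors_le_degree_mul_degree p.1 p.2
    _ ≤ (2 * #G.edgeFinset) * (2 * #G.edgeFinset) ^ 2 := by
        rw [card_adjPairs]; gcongr; exact G.sum_adjPairs_degree_mul_degree_le
    _ = (2 * #G.edgeFinset) ^ 3 := by ring

end SimpleGraph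

lemma Real.le_rpow_three_halves_of_sq_le_pow_three {x y : ℝ} (hx : 0 ≤ x) (hy : 0 ≤ y)
    (h : y ^ 2 ≤ x ^ 3) : y ≤ x ^ ((3 : ℝ) / 2) := by
  rw [← pow_le_pow_iff_left₀ hy (Real.rpow_nonneg hx _) two_ne_zero, ← Real.rpow_mul_natCast hx]
  norm_num
  exact_mod_cast h

/-- **Triangle count in a graph.** A finite simple graph with `M` edges has at most
`(2M)^(3/2) / 6` triangles (3-cliques). -/
theorem triangle_count_bound {V : Type*} [Fintype V] [DecidableEq V]
    (G : SimpleGraph V) [DecidableRel G.Adj] :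
    ((G.cliqueFinset 3).card : ℝ)
      ≤ ((2 * G.edgeFinset.card : ℕ) : ℝ) ^ ((3 : ℝ) / 2) / 6 := by
  rw [le_div_iff₀' (by norm_num)]
  refine Real.le_rpow_three_halves_of_sq_le_pow_three (by positivity) (by positivity) ?_
  exact_mod_cast G.sq_six_mul_card_cliqueFinset_three_le
end
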